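/- arXiv:1803.10688 — 9 statements merged into one kernel-verified Lean document; each statement's English description precedes it below -/
import Mathlib

section
/- Let m ≥ 1 and n ≥ 2 be natural numbers. Then φ(m+1, n) = Σ_{p=2m}^{n−2} C(n, p) · φ(m, p), where C(n,p) denotes the binomial coefficient. (In particular, when n < 2(m+1) both sides vanish.) -/
/-!
Sort the maps `Fin n → Fin (m + 1)` by the set `A` of objects that avoid the last urn. Such a
map with all fibers of size at least two is the same as such a map `A → Fin m`, provided the
last urn, which receives exactly `Aᶜ`, gets at least two objects, i.e. `#A ≤ n - 2`. The sets
`A` of size `p` thus contribute `C(n, p) φ(m, p)`, and `φ(m, p) = 0` for `p < 2m`.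
-/

/-- `phi m n` is the number of ways to place `n` distinct objects into `m` numbered urns
so that each urn receives at least two objects, i.e. the number of functions
`f : Fin n → Fin m` all of whose fibers have at least two elements. -/
def phi (m n : ℕ) : ℕ :=
  Fintype.card {f : Fin n → Fin m // ∀ i : Fin m, 2 ≤ (Finset.univ.filter fun x => f x = i).card}

open Finset

section Fibers

variable {α α' β : Type*} [Fintype α] [Fintype α'] [DecidableEq β]

def FibersAtLeastTwo (f : α → β) : Prop :=
  ∀ b, 2 ≤ #{x | f x = b}

instance [Fintype β] : DecidablePred (FibersAtLeastTwo : (α → β) → Prop) :=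
  fun _ => Fintype.decidableForallFintype

theorem fibersAtLeastTwo_comp_equiv_iff {f : α → β} (e : α' ≃ α) :
    FibersAtLeastTwo (f ∘ e) ↔ FibersAtLeastTwo f := by
  refine forall_congr' fun b => ?_
  rw [card_equiv e (t := {x | f x = b}) (by simp)]

theorem two_mul_card_le_card_of_fibersAtLeastTwo [Fintype β] {f : α → β}
    (hf : FibersAtLeastTwo f) : 2 * Fintype.card β ≤ Fintype.card α := by
  calc 2 * Fintype.card β = ∑ _ : β, 2 := by simp [mul_comm]
    _ ≤ ∑ b : β, #{x | f x = b} := sum_le_sum fun b _ => hf b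
    _ = Fintype.card α := (card_eq_sum_card_fiberwise fun x _ => mem_univ (f x)).symm

end Fibers

theorem phi_eq_card_fibersAtLeastTwo (m : ℕ) (α : Type*) [Fintype α] [DecidableEq α] :
    phi m (Fintype.card α) = Fintype.card {f : α → Fin m // FibersAtLeastTwo f} :=
  Fintype.card_congr <| (Equiv.arrowCongr (Fintype.equivFin α).symm (Equiv.refl _)).subtypeEquiv
    fun f => (fibersAtLeastTwo_comp_equiv_iff (f := f) _).symm

theorem phi_eq_zero_of_lt {m p : ℕ} (h : p < 2 * m) : phi m p = 0 :=
  Fintype.card_eq_zero_iff.mpr ⟨fun f => by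
    have := two_mul_card_le_card_of_fibersAtLeastTwo f.2
    simp only [Fintype.card_fin] at this
    omega⟩

section ExtendLast

variable {α : Type*} [DecidableEq α] {m : ℕ} (A : Finset α)

def extendLast (g : A → Fin m) (x : α) : Fin (m + 1) :=
  if h : x ∈ A then (g ⟨x, h⟩).castSucc else Fin.last m

theorem extendLast_injective : Function.Injective (extendLast (m := m) A) := by
  intro g g' h
  funext x
  simpa [extendLast] using congr_fun h x

variable [Fintype α]

theorem card_extendLast_eq_castSucc (g : A → Fin m) (j : Fin m) :
    #{x | extendLast A g x = j.castSucc} = #{x | g x = j} := by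
  symm
  refine card_bij (fun x _ => x.1) (fun x hx => ?_) (fun x _ y _ => Subtype.ext) fun y hy => ?_
  · simp only [mem_filter, mem_univ, true_and] at hx ⊢
    simp [extendLast, hx]
  · simp only [mem_filter, mem_univ, true_and] at hy ⊢
    by_cases h : y ∈ A
    · exact ⟨⟨y, h⟩, by simpa [extendLast, h] using hy, rfl⟩
    · simp [extendLast, h, (Fin.castSucc_lt_last j).ne'] at hy

theorem filter_extendLast_eq_last (g : A → Fin m) :
    ({x | extendLast A g x = Fin.last m} : Finset α) = Aᶜ := by
  ext x
  by_cases h : x ∈ A <;> simp [extendLast, h, (Fin.castSucc_lt_last _).ne]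

theorem filter_extendLast_ne_last (g : A → Fin m) :
    ({x | extendLast A g x ≠ Fin.last m} : Finset α) = A := by
  ext x
  by_cases h : x ∈ A <;> simp [extendLast, h, (Fin.castSucc_lt_last _).ne]

theorem fibersAtLeastTwo_extendLast_iff (g : A → Fin m) :
    FibersAtLeastTwo (extendLast A g) ↔ FibersAtLeastTwo g ∧ 2 ≤ #Aᶜ := by
  simp only [FibersAtLeastTwo, Fin.forall_fin_succ', card_extendLast_eq_castSucc,
    filter_extendLast_eq_last]

theorem exists_extendLast_eq_iff (f : α → Fin (m + 1)) :
    (∃ g, extendLast A g = f) ↔ ({x | f x ≠ Fin.last m} : Finset α) = A := by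
  constructor
  · rintro ⟨g, rfl⟩
    exact filter_extendLast_ne_last A g
  · rintro rfl
    refine ⟨fun x => (f x).castPred (mem_filter.mp x.2).2, funext fun x => ?_⟩
    by_cases h : f x = Fin.last m <;> simp [extendLast, h]

theorem card_fibersAtLeastTwo_of_filter_ne_last_eq :
    #{f : α → Fin (m + 1) | FibersAtLeastTwo f ∧ ({x | f x ≠ Fin.last m} : Finset α) = A} =
      if 2 ≤ #Aᶜ then phi m #A else 0 := by
  calc #{f : α → Fin (m + 1) | FibersAtLeastTwo f ∧ ({x | f x ≠ Fin.last m} : Finset α) = A}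
      = #(Finset.image (extendLast A) {g | FibersAtLeastTwo (extendLast A g)}) := by
        congr 1
        ext f
        simp only [mem_filter, mem_univ, true_and, mem_image, ← exists_extendLast_eq_iff]
        constructor
        · rintro ⟨hf, g, rfl⟩
          exact ⟨g, hf, rfl⟩
        · rintro ⟨g, hg, rfl⟩
          exact ⟨hg, g, rfl⟩
    _ = #{g : A → Fin m | FibersAtLeastTwo g ∧ 2 ≤ #Aᶜ} := by
        rw [card_image_of_injective _ (extendLast_injective A)]
        simp only [fibersAtLeastTwo_extendLast_iff]
    _ = if 2 ≤ #Aᶜ then phi m #A else 0 := by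
        split_ifs with h
        · simp only [h, and_true]
          rw [← Fintype.card_subtype, ← phi_eq_card_fibersAtLeastTwo, Fintype.card_coe]
        · simp [h]

end ExtendLast

theorem phi_succ_card_eq_sum (m : ℕ) (α : Type*) [Fintype α] [DecidableEq α] :
    phi (m + 1) (Fintype.card α) = ∑ A : Finset α, if 2 ≤ #Aᶜ then phi m #A else 0 := by
  rw [phi_eq_card_fibersAtLeastTwo, Fintype.card_subtype, card_eq_sum_card_fiberwise
    (f := fun f => ({x | f x ≠ Fin.last m} : Finset α)) (fun _ _ => mem_univ _)]
  simp only [filter_filter, card_fibersAtLeastTwo_of_filter_ne_last_eq]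

theorem phi_succ_eq_sum_general (m n : ℕ) (hn : 2 ≤ n) :
    phi (m + 1) n = ∑ p ∈ Finset.Icc (2 * m) (n - 2), n.choose p * phi m p := by
  set F : ℕ → ℕ := fun p => if 2 ≤ n - p then phi m p else 0
  calc phi (m + 1) n = ∑ A ∈ (univ : Finset (Fin n)).powerset, F #A := by
        simpa [card_compl] using phi_succ_card_eq_sum m (Fin n)
    _ = ∑ p ∈ range (n + 1), n.choose p * F p := by
        rw [sum_powerset_apply_card, card_univ, Fintype.card_fin]
        rfl
    _ = ∑ p ∈ Icc (2 * m) (n - 2), n.choose p * phi m p := by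
        symm
        refine sum_subset_zero_on_sdiff ?_ ?_ ?_
        · intro p hp
          simp only [mem_Icc, mem_range] at hp ⊢
          omega
        · intro p hp
          simp only [mem_sdiff, mem_range, mem_Icc, not_and_or, not_le] at hp
          rcases hp with ⟨-, hp | hp⟩
          · simp [F, phi_eq_zero_of_lt hp]
          · simp [F, show ¬2 ≤ n - p by omega]
        · intro p hp
          simp only [mem_Icc] at hp
          simp [F, show 2 ≤ n - p by omega]

theorem phi_succ_eq_sum (m n : ℕ) (hm : 1 ≤ m) (hn : 2 ≤ n) :
    phi (m + 1) n = ∑ p ∈ Finset.Icc (2 * m) (n - 2), n.choose p * phi m p :=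
  phi_succ_eq_sum_general m n hn
end

section
/- Let m ≥ 1 and n ≥ 2m be natural numbers. Then 1 − (m + n − 1)·((m−1)/m)^{n−1} ≤ φ(m, n)/m^n ≤ 1. -/
open Finset Fintype

section Fibers

variable {α β : Type*} [Fintype α] [DecidableEq α] [Fintype β] [DecidableEq β]

lemma card_filter_forall_ne (b : β) :
    #{f : α → β | ∀ x, f x ≠ b} = (card β - 1) ^ card α := by
  have : ({f : α → β | ∀ x, f x ≠ b} : Finset (α → β)) = piFinset fun _ => univ.erase b := by
    ext f; simp
  rw [this, card_piFinset]
  simp [card_erase_of_mem]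

lemma card_filter_forall_eq_iff (a : α) (b : β) :
    #{f : α → β | ∀ x, f x = b ↔ x = a} = (card β - 1) ^ (card α - 1) := by
  have : ({f : α → β | ∀ x, f x = b ↔ x = a} : Finset (α → β)) =
      piFinset fun x => if x = a then {b} else univ.erase b := by
    ext f
    simp only [mem_filter, mem_univ, true_and, mem_piFinset]
    refine forall_congr' fun x => ?_
    split_ifs with h <;> simp [h]
  rw [this, card_piFinset]
  simp [apply_ite, prod_ite, card_erase_of_mem, filter_ne']

lemma filter_card_fiber_le_one_subset (b : β) :
    ({f : α → β | #{x | f x = b} ≤ 1} : Finset (α → β)) ⊆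
      ({f : α → β | ∀ x, f x ≠ b} : Finset (α → β)) ∪
        univ.biUnion fun a => {f : α → β | ∀ x, f x = b ↔ x = a} := by
  intro f hf
  rw [mem_filter] at hf
  rcases Nat.le_one_iff_eq_zero_or_eq_one.1 hf.2 with h | h
  · refine mem_union_left _ ?_
    simpa [filter_eq_empty_iff] using h
  · obtain ⟨a, ha⟩ := card_eq_one.1 h
    refine mem_union_right _ (mem_biUnion.2 ⟨a, mem_univ _, ?_⟩)
    simpa using fun x => congr(x ∈ $ha)

lemma card_filter_card_fiber_le_one_le (b : β) :
    #{f : α → β | #{x | f x = b} ≤ 1} ≤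
      (card β - 1) ^ card α + card α * (card β - 1) ^ (card α - 1) :=
  calc _ ≤ #{f : α → β | ∀ x, f x ≠ b} + ∑ a, #{f : α → β | ∀ x, f x = b ↔ x = a} :=
        (card_le_card (filter_card_fiber_le_one_subset b)).trans
          ((card_union_le _ _).trans (Nat.add_le_add_left card_biUnion_le _))
    _ = _ := by simp [card_filter_forall_ne, card_filter_forall_eq_iff]

lemma card_pow_le_card_filter_two_le_card_fiber_add :
    card β ^ card α ≤ #{f : α → β | ∀ b, 2 ≤ #{x | f x = b}} +
      card β * ((card β - 1) ^ card α + card α * (card β - 1) ^ (card α - 1)) := by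
  have hbad : ({f : α → β | ¬ ∀ b, 2 ≤ #{x | f x = b}} : Finset (α → β)) ⊆
      univ.biUnion fun b => {f : α → β | #{x | f x = b} ≤ 1} :=
    fun f => by simp
  calc card β ^ card α
      = #{f : α → β | ∀ b, 2 ≤ #{x | f x = b}} + #{f : α → β | ¬ ∀ b, 2 ≤ #{x | f x = b}} := by
        rw [card_filter_add_card_filter_not, card_univ, card_fun]
    _ ≤ _ := by
        gcongr
        calc _ ≤ _ := card_le_card hbad
          _ ≤ _ := card_biUnion_le
          _ ≤ _ := sum_le_sum fun b _ => card_filter_card_fiber_le_one_le b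
          _ = _ := by simp

end Fibers

lemma phi_le_pow (m n : ℕ) : phi m n ≤ m ^ n :=
  (Fintype.card_subtype_le _).trans_eq (by simp)

lemma pow_le_phi_add (m n : ℕ) :
    m ^ n ≤ phi m n + m * ((m - 1) ^ n + n * (m - 1) ^ (n - 1)) := by
  rw [phi, Fintype.card_subtype]
  convert card_pow_le_card_filter_two_le_card_fiber_add (α := Fin n) (β := Fin m) <;> simp

lemma one_sub_mul_div_pow_mul_pow {m : ℝ} (hm : m ≠ 0) {n : ℕ} (hn : n ≠ 0) :
    (1 - (m + n - 1) * ((m - 1) / m) ^ (n - 1)) * m ^ n =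
      m ^ n - m * ((m - 1) ^ n + n * (m - 1) ^ (n - 1)) := by
  obtain ⟨k, rfl⟩ := Nat.exists_eq_add_one_of_ne_zero hn
  simp only [add_tsub_cancel_right, div_pow, pow_succ, Nat.cast_add, Nat.cast_one]
  field_simp
  ring

theorem phi_bounds (m n : ℕ) (hm : 1 ≤ m) (hn : 2 * m ≤ n) :
    1 - ((m : ℝ) + n - 1) * (((m : ℝ) - 1) / m) ^ (n - 1) ≤ (phi m n : ℝ) / (m : ℝ) ^ n ∧
      (phi m n : ℝ) / (m : ℝ) ^ n ≤ 1 := by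
  have hm0 : (0 : ℝ) < m := by exact_mod_cast hm
  have hcount : (m : ℝ) ^ n ≤ phi m n + m * (((m : ℝ) - 1) ^ n + n * ((m : ℝ) - 1) ^ (n - 1)) := by
    exact_mod_cast pow_le_phi_add m n
  refine ⟨?_, div_le_one_of_le₀ (by exact_mod_cast phi_le_pow m n) (by positivity)⟩
  rw [le_div_iff₀ (by positivity), one_sub_mul_div_pow_mul_pow hm0.ne' (by omega)]
  linarith
end

section
/- Let λ > 0 and d > 0 be real numbers with λ·d < 1, and define the sequence α : ℕ → ℝ recursively by α₀ = 1 and, for k ≥ 1, α_k = (λ/(1−λd)) · Σ_{t=0}^{k−1} (d^{k−t+1}/(k−t+1)!) · α_t. Then for every k ≥ 1, α_k = d^k · Σ_{t=1}^{k} (λd/(1−λd))^t · φ(t, k+t)/(k+t)!. (These α_k are the Taylor coefficients of the Pollaczek–Khintchine transform of the M/D/1 waiting time with constant service time d, i.e. α_k = E[W^k]/k!.) -/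
def cnt (m : ℕ) (α : Type) [Fintype α] [DecidableEq α] : ℕ :=
  Fintype.card {f : α → Fin m // ∀ i : Fin m, 2 ≤ (Finset.univ.filter fun x => f x = i).card}

lemma cnt_fin (m n : ℕ) : cnt m (Fin n) = phi m n := rfl

lemma cnt_congr (m : ℕ) {α β : Type} [Fintype α] [DecidableEq α] [Fintype β] [DecidableEq β]
    (e : α ≃ β) : cnt m α = cnt m β := by
  apply Fintype.card_congr
  refine ⟨fun f => ⟨f.1 ∘ e.symm, ?_⟩, fun g => ⟨g.1 ∘ e, ?_⟩, ?_, ?_⟩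
  · intro i
    refine le_trans (f.2 i) (le_of_eq ?_)
    rw [← Finset.card_map ⟨e, e.injective⟩]
    congr 1
    ext y
    simp [Finset.mem_map, Function.comp]
  · intro i
    refine le_trans (g.2 i) (le_of_eq ?_)
    rw [← Finset.card_map ⟨e.symm, e.symm.injective⟩]
    congr 1
    ext y
    simp [Finset.mem_map, Function.comp]
  · intro f; ext x; simp
  · intro g; ext x; simp

lemma cnt_eq_phi (m : ℕ) (α : Type) [Fintype α] [DecidableEq α] :
    cnt m α = phi m (Fintype.card α) := by
  rw [← cnt_fin]; exact cnt_congr m (Fintype.equivFin α)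

section Rec
variable {α : Type} [Fintype α] [DecidableEq α] {m : ℕ}

/-- functions with prescribed last fiber. -/
def lastFiberEquiv (s : Finset α) :
    {f : α → Fin (m+1) // Finset.univ.filter (fun x => f x = Fin.last m) = s} ≃
      ({x : α // x ∉ s} → Fin m) where
  toFun f x := (f.1 x.1).castPred (by
    intro h
    have hm : (x : α) ∈ Finset.univ.filter (fun y => f.1 y = Fin.last m) := by simp [h]
    rw [f.2] at hm
    exact x.2 hm)
  invFun g := ⟨fun x => if h : x ∈ s then Fin.last m else (g ⟨x, h⟩).castSucc, by
    ext x
    simp only [Finset.mem_filter, Finset.mem_univ, true_and]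
    constructor
    · intro h
      by_contra hx
      rw [dif_neg hx] at h
      exact absurd h (Fin.castSucc_lt_last _).ne
    · intro h; rw [dif_pos h]⟩
  left_inv f := by
    ext x
    by_cases h : x ∈ s
    · simp only [dif_pos h]
      have h2 : x ∈ Finset.univ.filter (fun x => f.1 x = Fin.last m) := f.2.symm ▸ h
      exact congrArg Fin.val ((Finset.mem_filter.mp h2).2).symm
    · simp [dif_neg h]
  right_inv g := by
    ext x
    simp [dif_neg x.2]

lemma fiber_card_transfer (s : Finset α)
    (f : {f : α → Fin (m+1) // Finset.univ.filter (fun x => f x = Fin.last m) = s})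
    (i : Fin m) :
    (Finset.univ.filter fun x : {x : α // x ∉ s} => lastFiberEquiv s f x = i).card =
      (Finset.univ.filter fun x : α => f.1 x = i.castSucc).card := by
  apply Finset.card_bij (fun x _ => x.1)
  · intro x hx
    simp only [Finset.mem_filter, Finset.mem_univ, true_and] at hx ⊢
    simpa [lastFiberEquiv, Fin.castPred_eq_iff_eq_castSucc] using hx
  · intro a _ b _ h; exact Subtype.ext h
  · intro x hx
    simp only [Finset.mem_filter, Finset.mem_univ, true_and] at hx
    have hns : x ∉ s := by
      rw [← f.2]
      simp only [Finset.mem_filter, Finset.mem_univ, true_and, hx]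
      exact (Fin.castSucc_lt_last _).ne
    refine ⟨⟨x, hns⟩, ?_, rfl⟩
    simp [lastFiberEquiv, Fin.castPred_eq_iff_eq_castSucc, hx]

lemma card_fixed_fiber (s : Finset α) :
    Fintype.card {f : α → Fin (m+1) //
        (∀ i : Fin (m+1), 2 ≤ (Finset.univ.filter fun x => f x = i).card) ∧
        Finset.univ.filter (fun x => f x = Fin.last m) = s} =
      if 2 ≤ s.card then cnt m {x : α // x ∉ s} else 0 := by
  by_cases hs : 2 ≤ s.card
  · rw [if_pos hs]
    apply Fintype.card_congr
    refine Equiv.trans (Equiv.subtypeEquivRight fun f => and_comm) ?_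
    refine Equiv.trans (Equiv.subtypeSubtypeEquivSubtypeInter _ _).symm ?_
    refine Equiv.subtypeEquiv (lastFiberEquiv s) fun f => ?_
    constructor
    · intro h i
      rw [fiber_card_transfer]
      exact h i.castSucc
    · intro h i
      refine Fin.lastCases ?_ (fun j => ?_) i
      · rw [f.2]; exact hs
      · rw [← fiber_card_transfer s f j]; exact h j
  · rw [if_neg hs]
    rw [Fintype.card_eq_zero_iff]
    constructor
    intro f
    exact hs (f.2.2 ▸ f.2.1 (Fin.last m))

lemma card_not_mem (s : Finset α) :
    Fintype.card {x : α // x ∉ s} = Fintype.card α - s.card := by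
  rw [← Finset.card_compl]
  simp [Fintype.card_subtype, Finset.compl_eq_univ_sdiff, Finset.sdiff_eq_filter]

lemma cnt_succ : cnt (m+1) α =
    ∑ j ∈ Finset.Icc 2 (Fintype.card α),
      (Fintype.card α).choose j * phi m (Fintype.card α - j) := by
  classical
  have h1 : cnt (m+1) α = ∑ s : Finset α,
      Fintype.card {f : α → Fin (m+1) //
        (∀ i : Fin (m+1), 2 ≤ (Finset.univ.filter fun x => f x = i).card) ∧
        Finset.univ.filter (fun x => f x = Fin.last m) = s} := by
    rw [cnt, ← Fintype.card_sigma]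
    apply Fintype.card_congr
    exact (Equiv.sigmaFiberEquiv
      (fun f : {f : α → Fin (m+1) // ∀ i : Fin (m+1),
          2 ≤ (Finset.univ.filter fun x => f x = i).card} =>
        Finset.univ.filter (fun x => f.1 x = Fin.last m))).symm.trans
      (Equiv.sigmaCongrRight fun s => Equiv.subtypeSubtypeEquivSubtypeInter
        (fun f : α → Fin (m+1) => ∀ i : Fin (m+1),
          2 ≤ (Finset.univ.filter fun x => f x = i).card)
        (fun f => Finset.univ.filter (fun x => f x = Fin.last m) = s))
  rw [h1]
  simp only [card_fixed_fiber, cnt_eq_phi, card_not_mem]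
  rw [← Finset.powerset_univ,
    Finset.sum_powerset_apply_card (fun j => if 2 ≤ j then phi m (Fintype.card α - j) else 0),
    Finset.card_univ]
  have hsub : Finset.Icc 2 (Fintype.card α) ⊆ Finset.range (Fintype.card α + 1) := by
    intro j hj; simp only [Finset.mem_Icc] at hj; simp [Nat.lt_succ_iff, hj.2]
  refine Eq.trans (Finset.sum_subset hsub (fun j hjr hj => ?_)).symm
    (Finset.sum_congr rfl fun j hj => ?_)
  · have h2 : ¬ 2 ≤ j := by
      intro h2
      simp only [Finset.mem_range, Nat.lt_succ_iff] at hjr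
      exact hj (Finset.mem_Icc.mpr ⟨h2, hjr⟩)
    simp [h2]
  · rw [if_pos (Finset.mem_Icc.mp hj).1, smul_eq_mul]
end Rec

lemma phi_succ (m n : ℕ) :
    phi (m+1) n = ∑ j ∈ Finset.Icc 2 n, n.choose j * phi m (n - j) := by
  have := cnt_succ (α := Fin n) (m := m)
  simpa [cnt_fin, Fintype.card_fin] using this

lemma phi_one {n : ℕ} (h : 2 ≤ n) : phi 1 n = 1 := by
  rw [phi, Fintype.card_eq_one_iff]
  refine ⟨⟨fun _ => 0, fun i => ?_⟩, fun g => ?_⟩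
  · have : (Finset.univ.filter fun _ : Fin n => (0 : Fin 1) = i) = Finset.univ := by
      apply Finset.filter_true_of_mem
      intro x _
      exact Subsingleton.elim _ _
    simpa [this] using h
  · ext x
    exact congrArg Fin.val (Subsingleton.elim _ _)

lemma phi_zero_of_lt {m n : ℕ} (h : n < 2 * m) : phi m n = 0 := by
  rw [phi, Fintype.card_eq_zero_iff]
  constructor
  intro f
  have hsum : (Finset.univ : Finset (Fin n)).card =
      ∑ i : Fin m, (Finset.univ.filter fun x => f.1 x = i).card :=
    Finset.card_eq_sum_card_fiberwise (fun x _ => Finset.mem_univ _)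
  have h2 : 2 * m ≤ n := by
    calc 2 * m = ∑ _i : Fin m, 2 := by simp [mul_comm]
    _ ≤ ∑ i : Fin m, (Finset.univ.filter fun x => f.1 x = i).card :=
      Finset.sum_le_sum fun i _ => f.2 i
    _ = n := by rw [← hsum, Finset.card_univ, Fintype.card_fin]
  omega

open Finset in
lemma star (k v : ℕ) (hv : 1 ≤ v) (hvk : v + 1 ≤ k) :
    (phi (v+1) (k+v+1) : ℝ) / (k+v+1).factorial =
      ∑ t ∈ Finset.Icc v (k-1),
        (phi v (t+v) : ℝ) / ((k-t+1).factorial * (t+v).factorial) := by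
  have h1 : phi (v+1) (k+v+1) = ∑ j ∈ Finset.Icc 2 (k-v+1),
      (k+v+1).choose j * phi v (k+v+1-j) := by
    rw [phi_succ]
    refine (Finset.sum_subset (fun j hj => ?_) (fun j hj1 hj2 => ?_)).symm
    · simp only [mem_Icc] at hj ⊢; omega
    · simp only [mem_Icc] at hj1 hj2
      have : k+v+1-j < 2*v := by omega
      rw [phi_zero_of_lt this, Nat.mul_zero]
  rw [h1]
  push_cast
  rw [Finset.sum_div]
  refine Finset.sum_nbij' (fun j => k+1-j) (fun t => k+1-t) ?_ ?_ ?_ ?_ ?_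
  · intro j hj; simp only [mem_Icc] at hj ⊢; omega
  · intro t ht; simp only [mem_Icc] at ht ⊢; omega
  · intro j hj; simp only [mem_Icc] at hj; show k+1-(k+1-j) = j; omega
  · intro t ht; simp only [mem_Icc] at ht; show k+1-(k+1-t) = t; omega
  · intro j hj
    simp only [mem_Icc] at hj
    have hj1 : k+v+1-j = (k+1-j) + v := by omega
    have hj2 : k - (k+1-j) + 1 = j := by omega
    rw [hj1, hj2]
    have hle : j ≤ k+v+1 := by omega
    have hfact := Nat.choose_mul_factorial_mul_factorial hle
    have h3 : k+v+1-j = (k+1-j)+v := hj1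
    have hne1 : (((k+1-j)+v).factorial : ℝ) ≠ 0 := by positivity
    have hne2 : ((j.factorial : ℝ)) ≠ 0 := by positivity
    have hne3 : (((k+v+1).factorial : ℝ)) ≠ 0 := by positivity
    have hfactR : ((k+v+1).choose j : ℝ) * j.factorial * ((k+1-j)+v).factorial
        = (k+v+1).factorial := by
      rw [← h3]; exact_mod_cast congrArg (Nat.cast (R := ℝ)) hfact
    field_simp
    nlinarith [hfactR]

open Finset in
lemma core (r : ℝ) (k : ℕ) (hk : 1 ≤ k) :
    r * ((1:ℝ)/(k+1).factorial + ∑ t ∈ Finset.Icc 1 (k-1), ∑ s ∈ Finset.Icc 1 t,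
        r^s * (phi s (t+s) : ℝ) / ((k-t+1).factorial * (t+s).factorial))
      = ∑ u ∈ Finset.Icc 1 k, r^u * (phi u (k+u) : ℝ) / (k+u).factorial := by
  have hswap : (∑ t ∈ Finset.Icc 1 (k-1), ∑ s ∈ Finset.Icc 1 t,
        r^s * (phi s (t+s) : ℝ) / ((k-t+1).factorial * (t+s).factorial))
      = ∑ s ∈ Finset.Icc 1 (k-1), ∑ t ∈ Finset.Icc s (k-1),
        r^s * (phi s (t+s) : ℝ) / ((k-t+1).factorial * (t+s).factorial) :=
    Finset.sum_comm' (by intro x y; simp only [mem_Icc]; omega)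
  rw [hswap]
  have hinner : ∀ s ∈ Finset.Icc 1 (k-1),
      (∑ t ∈ Finset.Icc s (k-1),
        r^s * (phi s (t+s) : ℝ) / ((k-t+1).factorial * (t+s).factorial))
      = r^s * ((phi (s+1) (k+s+1) : ℝ) / (k+s+1).factorial) := by
    intro s hs
    simp only [mem_Icc] at hs
    rw [star k s hs.1 (by omega), Finset.mul_sum]
    exact Finset.sum_congr rfl fun t _ => by ring
  rw [Finset.sum_congr rfl hinner]
  have hsplit : Finset.Icc 1 k = insert 1 (Finset.Icc 2 k) := by
    ext x; simp only [mem_insert, mem_Icc]; omega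
  rw [hsplit, Finset.sum_insert (by simp)]
  rw [phi_one (show 2 ≤ k+1 by omega)]
  rw [mul_add, Finset.mul_sum]
  have hre : (∑ s ∈ Finset.Icc 1 (k-1),
        r * (r^s * ((phi (s+1) (k+s+1) : ℝ) / (k+s+1).factorial)))
      = ∑ u ∈ Finset.Icc 2 k, r^u * (phi u (k+u) : ℝ) / (k+u).factorial := by
    refine Finset.sum_nbij' (fun s => s+1) (fun u => u-1) ?_ ?_ ?_ ?_ ?_
    · intro s hs; simp only [mem_Icc] at hs ⊢; omega
    · intro u hu; simp only [mem_Icc] at hu ⊢; omega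
    · intro s hs; simp only [mem_Icc] at hs; show s+1-1 = s; omega
    · intro u hu; simp only [mem_Icc] at hu; show u-1+1 = u; omega
    · intro s hs
      simp only [mem_Icc] at hs
      have h2 : k+s+1 = k+(s+1) := by omega
      rw [h2, pow_succ']
      ring
  rw [hre]
  congr 1
  push_cast
  ring


/-- The Taylor coefficients of the M/D/1 Pollaczek–Khintchine waiting-time transform
(constant service time `d`, arrival rate `lam`), defined by the M/G/1 moment recursion,
are given explicitly in terms of the urn-counting function `phi`. -/
theorem md1_taylor_coefficients (lam d : ℝ) (hlam : 0 < lam) (hd : 0 < d)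
    (hld : lam * d < 1) (α : ℕ → ℝ) (h0 : α 0 = 1)
    (hrec : ∀ k, 1 ≤ k → α k = lam / (1 - lam * d) *
      ∑ t ∈ Finset.range k, d ^ (k - t + 1) / (k - t + 1).factorial * α t) :
    ∀ k, 1 ≤ k → α k = d ^ k * ∑ t ∈ Finset.Icc 1 k,
      (lam * d / (1 - lam * d)) ^ t * (phi t (k + t) : ℝ) / (k + t).factorial := by
  intro k
  induction k using Nat.strong_induction_on with
  | _ k IH =>
    intro hk
    have hne : (1 : ℝ) - lam * d ≠ 0 := by nlinarith
    rw [hrec k hk]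
    have hsplit : Finset.range k = insert 0 (Finset.Icc 1 (k-1)) := by
      ext x; simp only [Finset.mem_range, Finset.mem_insert, Finset.mem_Icc]; omega
    rw [hsplit, Finset.sum_insert (by simp), Nat.sub_zero, h0, mul_one]
    have hIH : ∀ t ∈ Finset.Icc 1 (k-1),
        d ^ (k - t + 1) / ((k - t + 1).factorial : ℝ) * α t
          = d ^ (k+1) * ∑ s ∈ Finset.Icc 1 t,
            (lam * d / (1 - lam * d)) ^ s * (phi s (t+s) : ℝ) /
              ((k - t + 1).factorial * (t+s).factorial) := by
      intro t ht
      simp only [Finset.mem_Icc] at ht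
      rw [IH t (by omega) ht.1]
      have hpow : d ^ (k - t + 1) * d ^ t = d ^ (k+1) := by
        rw [← pow_add]; congr 1; omega
      rw [show d ^ (k - t + 1) / ((k - t + 1).factorial : ℝ) *
          (d ^ t * ∑ s ∈ Finset.Icc 1 t,
            (lam * d / (1 - lam * d)) ^ s * (phi s (t+s) : ℝ) / (t+s).factorial)
          = d ^ (k+1) * ((∑ s ∈ Finset.Icc 1 t,
            (lam * d / (1 - lam * d)) ^ s * (phi s (t+s) : ℝ) / (t+s).factorial) /
              ((k - t + 1).factorial : ℝ)) from by rw [← hpow]; ring]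
      rw [Finset.sum_div]
      congr 1
      refine Finset.sum_congr rfl fun s _ => ?_
      rw [div_div, mul_comm ((t+s).factorial : ℝ)]
    rw [Finset.sum_congr rfl hIH, ← Finset.mul_sum]
    rw [← core (lam * d / (1 - lam * d)) k hk]
    have key : ∀ S : ℝ, lam / (1 - lam * d) *
        (d ^ (k+1) / ((k+1).factorial : ℝ) + d ^ (k+1) * S)
          = d ^ k * (lam * d / (1 - lam * d) *
            ((1:ℝ) / ((k+1).factorial : ℝ) + S)) := by
      intro S
      have hfact : (((k+1).factorial : ℝ)) ≠ 0 := by positivity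
      field_simp
      ring
    exact key _
end

section
/- Let μ be a probability measure on ℝ giving full mass to [0,∞), let λ > 0, and let σ ∈ ℝ be such that the function x ↦ e^{−σx} is μ-integrable and σ = λ·(1 − ∫ e^{−σx} dμ(x)). If t ∈ ℝ is such that the complex equation σ + i·t = λ·(1 − ∫ e^{−(σ+it)x} dμ(x)) holds, then t = 0. (That is, a real zero σ of the denominator s − λ(1 − E[e^{−sD}]) of the Pollaczek–Khintchine transform is the only zero on the vertical line Re s = σ.) -/
/-!
Taking real parts of the equation at `s = σ + it` and comparing with the equation at `σ` gives
`Re ∫ e^{-sx} dμ = ∫ |e^{-sx}| dμ`. Since `Re z ≤ |z|` pointwise, this forces `e^{-sx}` to be a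
nonnegative real for `μ`-a.e. `x`, so the transform at `s` equals the real one at `σ`, and the
equation at `s` then reads `σ + it = σ`.
-/

open MeasureTheory Complex

theorem Complex.ae_eq_norm_of_re_integral_eq_integral_norm {α : Type*} [MeasurableSpace α]
    {μ : Measure α} {f : α → ℂ} (hf : Integrable f μ)
    (h : (∫ x, f x ∂μ).re = ∫ x, ‖f x‖ ∂μ) :
    f =ᵐ[μ] fun x => (‖f x‖ : ℂ) := by
  have hf_re : Integrable (fun x => (f x).re) μ := hf.re
  have hgap : ∫ x, (‖f x‖ - (f x).re) ∂μ = 0 := by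
    rw [integral_sub hf.norm hf_re, ← h]
    exact sub_eq_zero.mpr (integral_re hf).symm
  have hgap_nonneg : 0 ≤ᵐ[μ] fun x => ‖f x‖ - (f x).re :=
    .of_forall fun x => sub_nonneg.mpr (re_le_norm (f x))
  filter_upwards [(integral_eq_zero_iff_of_nonneg_ae hgap_nonneg (hf.norm.sub hf_re)).mp hgap]
    with x hx
  exact eq_coe_norm_of_nonneg (re_eq_norm.mp (sub_eq_zero.mp hx).symm)

theorem Complex.norm_cexp_neg_mul_ofReal (σ t x : ℝ) :
    ‖cexp (-((σ : ℂ) + t * I) * x)‖ = Real.exp (-σ * x) := by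
  simp [Complex.norm_exp]

theorem pk_denominator_zero_isolated_on_vertical_line_general
    (μ : Measure ℝ)
    (lam : ℝ) (hlam : 0 < lam) (σ : ℝ)
    (hint : Integrable (fun x => Real.exp (-σ * x)) μ)
    (hσ : σ = lam * (1 - ∫ x, Real.exp (-σ * x) ∂μ))
    (t : ℝ)
    (ht : (σ : ℂ) + t * Complex.I =
      (lam : ℂ) * (1 - ∫ x, Complex.exp (-((σ : ℂ) + t * Complex.I) * x) ∂μ)) :
    t = 0 := by
  set f : ℝ → ℂ := fun x => cexp (-((σ : ℂ) + t * I) * x)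
  have hnorm : (fun x => ‖f x‖) = fun x => Real.exp (-σ * x) :=
    funext (norm_cexp_neg_mul_ofReal σ t)
  have hf : Integrable f μ :=
    (integrable_norm_iff (by fun_prop)).mp (hnorm ▸ hint)
  have hre : (∫ x, f x ∂μ).re = ∫ x, ‖f x‖ ∂μ := by
    have hσ' := congrArg re ht
    simp only [add_re, ofReal_re, mul_re, I_re, I_im, ofReal_im, sub_re, one_re, sub_im,
      one_im, mul_zero, zero_mul, sub_zero, add_zero] at hσ'
    rw [hnorm]
    linarith [mul_left_cancel₀ hlam.ne' (hσ.symm.trans hσ')]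
  have hL : ∫ x, f x ∂μ = ↑(∫ x, Real.exp (-σ * x) ∂μ) := by
    rw [integral_congr_ae (ae_eq_norm_of_re_integral_eq_integral_norm hf hre),
      integral_complex_ofReal, hnorm]
  rw [hL, ← ofReal_one, ← ofReal_sub, ← ofReal_mul, ← hσ] at ht
  simpa using congrArg im ht

/-- A real zero `σ` of the denominator `s - λ(1 - E[e^{-sD}])` of the Pollaczek–Khintchine
transform is the only zero on the vertical line `Re s = σ`. -/
theorem pk_denominator_zero_isolated_on_vertical_line
    (μ : Measure ℝ) [IsProbabilityMeasure μ] (hsupp : μ {x | x < 0} = 0)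
    (lam : ℝ) (hlam : 0 < lam) (σ : ℝ)
    (hint : Integrable (fun x => Real.exp (-σ * x)) μ)
    (hσ : σ = lam * (1 - ∫ x, Real.exp (-σ * x) ∂μ))
    (t : ℝ)
    (ht : (σ : ℂ) + t * Complex.I =
      (lam : ℂ) * (1 - ∫ x, Complex.exp (-((σ : ℂ) + t * Complex.I) * x) ∂μ)) :
    t = 0 :=
  pk_denominator_zero_isolated_on_vertical_line_general μ lam hlam σ hint hσ t ht
end

section
/- Let r > 0, s > 0 be real numbers and k ∈ ℕ. Consider the sequence a_n = [ (n+1)! · (e·s·r/(n+k+1))^{(n+k+1)/r} ] / [ n! · (e·s·r/(n+k))^{(n+k)/r} ] (defined for n+k ≥ 1, with real-valued exponentiation). Then: a_n → 0 as n → ∞ if r < 1; a_n → s if r = 1; and a_n → ∞ if r > 1. -/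
open Filter

/-- The ratio-test limit governing the convergence of the power series bounding the
derivatives of an entire cost function of growth order `r` and type `s`. -/
theorem ratio_test_trichotomy (r s : ℝ) (hr : 0 < r) (hs : 0 < s) (k : ℕ) :
    let a : ℕ → ℝ := fun n =>
      (((n + 1).factorial : ℝ) *
          (Real.exp 1 * s * r / ((n : ℝ) + k + 1)) ^ (((n : ℝ) + k + 1) / r)) /
        ((n.factorial : ℝ) * (Real.exp 1 * s * r / ((n : ℝ) + k)) ^ (((n : ℝ) + k) / r))
    (r < 1 → Tendsto a atTop (nhds 0)) ∧
    (r = 1 → Tendsto a atTop (nhds s)) ∧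
    (1 < r → Tendsto a atTop atTop) := by
  intro a
  set c : ℝ := Real.exp 1 * s * r with hc_def
  have hc : 0 < c := by
    have := Real.exp_pos 1
    positivity
  have hr' : r ≠ 0 := hr.ne'
  set g : ℕ → ℝ := fun n =>
    -(1/r) * Real.log (((n:ℝ)+k+1)/((n:ℝ)+1)) + (1/r) * Real.log c
      - (1/r) * (((n:ℝ)+k) * Real.log (1 + 1/((n:ℝ)+k))) with hg_def
  -- the key eventual equality
  have key : (fun n => a n) =ᶠ[atTop]
      (fun n => Real.exp ((1 - 1/r) * Real.log ((n:ℝ)+1) + g n)) := by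
    filter_upwards [eventually_ge_atTop 1] with n hn
    have hn1R : (1:ℝ) ≤ (n:ℝ) := by exact_mod_cast hn
    have hk0 : (0:ℝ) ≤ (k:ℝ) := Nat.cast_nonneg k
    have hm : (0:ℝ) < (n:ℝ) + k := by linarith
    have hm1 : (0:ℝ) < (n:ℝ) + k + 1 := by linarith
    have hn1 : (0:ℝ) < (n:ℝ) + 1 := by linarith
    have hfac : (0:ℝ) < (n.factorial : ℝ) := by exact_mod_cast n.factorial_pos
    have efac : (((n+1).factorial : ℕ) : ℝ) = ((n:ℝ)+1) * (n.factorial : ℝ) := by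
      push_cast [Nat.factorial_succ]; ring
    have e1 : (c/((n:ℝ)+k+1)) ^ (((n:ℝ)+k+1)/r)
        = Real.exp ((((n:ℝ)+k+1)/r) * Real.log (c/((n:ℝ)+k+1))) := by
      rw [Real.rpow_def_of_pos (div_pos hc hm1), mul_comm]
    have e2 : (c/((n:ℝ)+k)) ^ (((n:ℝ)+k)/r)
        = Real.exp ((((n:ℝ)+k)/r) * Real.log (c/((n:ℝ)+k))) := by
      rw [Real.rpow_def_of_pos (div_pos hc hm), mul_comm]
    have step : a n = (((n:ℝ)+1) * Real.exp ((((n:ℝ)+k+1)/r) * Real.log (c/((n:ℝ)+k+1))))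
        / Real.exp ((((n:ℝ)+k)/r) * Real.log (c/((n:ℝ)+k))) := by
      simp only [a]
      rw [efac, e1, e2]
      have hx1 : Real.exp ((((n:ℝ)+k)/r) * Real.log (c/((n:ℝ)+k))) ≠ 0 := Real.exp_ne_zero _
      have hx2 : (n.factorial : ℝ) ≠ 0 := hfac.ne'
      field_simp
    rw [step, show ((n:ℝ)+1) = Real.exp (Real.log ((n:ℝ)+1)) from (Real.exp_log hn1).symm,
      ← Real.exp_add, ← Real.exp_sub]
    congr 1
    rw [Real.log_div hc.ne' hm1.ne', Real.log_div hc.ne' hm.ne', hg_def]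
    simp only [Real.log_exp]
    rw [Real.log_div hm1.ne' hn1.ne',
      show (1 + 1/((n:ℝ)+k)) = ((n:ℝ)+k+1)/((n:ℝ)+k) by field_simp,
      Real.log_div hm1.ne' hm.ne']
    field_simp
    ring
  -- the limit of g
  have hmk : Tendsto (fun n : ℕ => (n:ℝ)+k) atTop atTop :=
    tendsto_atTop_add_const_right _ _ tendsto_natCast_atTop_atTop
  have hn1T : Tendsto (fun n : ℕ => (n:ℝ)+1) atTop atTop :=
    tendsto_atTop_add_const_right _ _ tendsto_natCast_atTop_atTop
  have t1 : Tendsto (fun n : ℕ => (((n:ℝ)+k+1)/((n:ℝ)+1))) atTop (nhds 1) := by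
    have h0 : Tendsto (fun n : ℕ => ((k:ℝ))/((n:ℝ)+1)) atTop (nhds 0) :=
      tendsto_const_nhds.div_atTop hn1T
    have : (fun n : ℕ => (((n:ℝ)+k+1)/((n:ℝ)+1))) = fun n : ℕ => 1 + ((k:ℝ))/((n:ℝ)+1) := by
      funext n
      have : ((n:ℝ)+1) ≠ 0 := by positivity
      field_simp
      ring
    rw [this]
    simpa using tendsto_const_nhds.add h0
  have t1' : Tendsto (fun n : ℕ => Real.log (((n:ℝ)+k+1)/((n:ℝ)+1))) atTop (nhds 0) := by
    have := (Real.continuousAt_log one_ne_zero).tendsto.comp t1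
    simpa [Function.comp_def] using this
  have t2 : Tendsto (fun n : ℕ => ((n:ℝ)+k) * Real.log (1 + 1/((n:ℝ)+k))) atTop (nhds 1) := by
    have := (Real.tendsto_mul_log_one_add_div_atTop 1).comp hmk
    simpa [Function.comp_def] using this
  have hg : Tendsto g atTop (nhds ((Real.log c - 1)/r)) := by
    have := ((t1'.const_mul (-(1/r))).add
        (tendsto_const_nhds : Tendsto (fun _ : ℕ => (1/r)*Real.log c) atTop _)).sub
        (t2.const_mul (1/r))
    have heq : -(1/r)*0 + (1/r)*Real.log c - (1/r)*1 = (Real.log c - 1)/r := by ring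
    rw [heq] at this
    exact this
  have hlogT : Tendsto (fun n : ℕ => Real.log ((n:ℝ)+1)) atTop atTop :=
    Real.tendsto_log_atTop.comp hn1T
  refine ⟨?_, ?_, ?_⟩
  · -- r < 1
    intro hr1
    have h1 : (1 - 1/r) < 0 := by
      have := one_lt_one_div hr hr1
      linarith
    have hb : Tendsto (fun n : ℕ => (1 - 1/r) * Real.log ((n:ℝ)+1)) atTop atBot :=
      (tendsto_const_mul_atBot_of_neg h1).2 hlogT
    have hE : Tendsto (fun n : ℕ => (1 - 1/r) * Real.log ((n:ℝ)+1) + g n) atTop atBot := by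
      refine tendsto_atBot_add_right_of_ge' _ ((Real.log c - 1)/r + 1) hb ?_
      exact hg.eventually_le_const (lt_add_one _)
    exact (Real.tendsto_exp_atBot.comp hE).congr' key.symm
  · -- r = 1
    intro hr1
    subst hr1
    have hE : Tendsto (fun n : ℕ => (1 - 1/(1:ℝ)) * Real.log ((n:ℝ)+1) + g n) atTop
        (nhds (Real.log c - 1)) := by
      simp_rw [show (1 - 1/(1:ℝ)) = 0 by norm_num, zero_mul, zero_add]
      simpa using hg
    have hls : Real.log c - 1 = Real.log s := by
      rw [hc_def, mul_one, Real.log_mul (Real.exp_ne_zero 1) hs.ne', Real.log_exp]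
      ring
    rw [hls] at hE
    have := (Real.continuous_exp.tendsto _).comp hE
    rw [Real.exp_log hs] at this
    exact this.congr' key.symm
  · -- 1 < r
    intro hr1
    have h1 : 0 < (1 - 1/r) := by
      have : 1/r < 1 := by
        rw [div_lt_one hr]; exact hr1
      linarith
    have hb : Tendsto (fun n : ℕ => (1 - 1/r) * Real.log ((n:ℝ)+1)) atTop atTop :=
      (tendsto_const_mul_atTop_of_pos h1).2 hlogT
    have hE : Tendsto (fun n : ℕ => (1 - 1/r) * Real.log ((n:ℝ)+1) + g n) atTop atTop := by
      refine tendsto_atTop_add_right_of_le' _ ((Real.log c - 1)/r - 1) hb ?_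
      exact hg.eventually_const_le (by linarith [lt_add_one ((Real.log c - 1)/r)] : (Real.log c - 1)/r - 1 < (Real.log c - 1)/r)
    exact (Real.tendsto_exp_atTop.comp hE).congr' key.symm
end

section
/- Let x, y be real numbers with 0 ≤ x ≤ y and let j ∈ ℕ. Then | Σ_{t=0}^{j} x^t/t! − e^{x−y} · Σ_{t=0}^{j} y^t/t! | ≤ 2·y^{j+1}·e^{x}/(j+1)!. -/
open Finset in
lemma exp_tail_bound (x : ℝ) (hx : 0 ≤ x) (n : ℕ) :
    Real.exp x - ∑ t ∈ Finset.range n, x ^ t / t.factorial ≤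
      x ^ n * Real.exp x / n.factorial := by
  have hsum : HasSum (fun t : ℕ => x ^ t / t.factorial) (Real.exp x) := by
    rw [Real.exp_eq_exp_ℝ]
    exact NormedSpace.expSeries_div_hasSum_exp x
  have hS : Summable (fun t : ℕ => x ^ t / t.factorial) := hsum.summable
  have htail : Real.exp x - ∑ t ∈ Finset.range n, x ^ t / t.factorial
      = ∑' k : ℕ, x ^ (k + n) / (k + n).factorial := by
    have := Summable.sum_add_tsum_nat_add n hS
    rw [hsum.tsum_eq] at this
    linarith
  rw [htail]
  have hterm : ∀ k : ℕ, x ^ (k + n) / (k + n).factorial ≤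
      x ^ n / n.factorial * (x ^ k / k.factorial) := by
    intro k
    rw [div_mul_div_comm, ← pow_add, add_comm n k]
    have h2 : (k.factorial * n.factorial : ℕ) ≤ (k + n).factorial :=
      Nat.le_of_dvd (k + n).factorial_pos (Nat.factorial_mul_factorial_dvd_factorial_add k n)
    have h2' : ((k.factorial * n.factorial : ℕ) : ℝ) ≤ ((k + n).factorial : ℝ) := by
      exact_mod_cast h2
    push_cast at h2'
    apply div_le_div_of_nonneg_left (by positivity) (by positivity)
    linarith
  have hS2 : Summable (fun k : ℕ => x ^ n / n.factorial * (x ^ k / k.factorial)) :=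
    hS.mul_left _
  calc ∑' k : ℕ, x ^ (k + n) / (k + n).factorial
      ≤ ∑' k : ℕ, x ^ n / n.factorial * (x ^ k / k.factorial) :=
        Summable.tsum_le_tsum hterm ((summable_nat_add_iff n).mpr hS) hS2
    _ = x ^ n / n.factorial * Real.exp x := by rw [tsum_mul_left, hsum.tsum_eq]
    _ = x ^ n * Real.exp x / n.factorial := by ring

lemma exp_tail_nonneg (x : ℝ) (hx : 0 ≤ x) (n : ℕ) :
    0 ≤ Real.exp x - ∑ t ∈ Finset.range n, x ^ t / t.factorial :=
  sub_nonneg.mpr (Real.sum_le_exp_of_nonneg hx n)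

/-- Bound on the difference between a partial exponential sum at `x` and the
`e^{x−y}`-weighted partial exponential sum at `y`, for `0 ≤ x ≤ y`. -/
theorem partial_exp_sum_difference_bound (x y : ℝ) (hx : 0 ≤ x) (hxy : x ≤ y) (j : ℕ) :
    |(∑ t ∈ Finset.range (j + 1), x ^ t / t.factorial) -
        Real.exp (x - y) * ∑ t ∈ Finset.range (j + 1), y ^ t / t.factorial| ≤
      2 * y ^ (j + 1) * Real.exp x / (j + 1).factorial := by
  have hy : 0 ≤ y := hx.trans hxy
  set Sx := ∑ t ∈ Finset.range (j + 1), x ^ t / t.factorial with hSx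
  set Sy := ∑ t ∈ Finset.range (j + 1), y ^ t / t.factorial with hSy
  have hx1 := exp_tail_bound x hx (j + 1)
  have hx0 := exp_tail_nonneg x hx (j + 1)
  have hy1 := exp_tail_bound y hy (j + 1)
  have hy0 := exp_tail_nonneg y hy (j + 1)
  have key : Sx - Real.exp (x - y) * Sy
      = (Sx - Real.exp x) + Real.exp (x - y) * (Real.exp y - Sy) := by
    rw [Real.exp_sub]
    field_simp
    ring
  rw [key]
  have hE : 0 < Real.exp (x - y) := Real.exp_pos _
  have h1 : |Sx - Real.exp x| ≤ x ^ (j + 1) * Real.exp x / (j + 1).factorial := by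
    rw [abs_sub_comm, abs_of_nonneg hx0]; exact hx1
  have h2 : |Real.exp (x - y) * (Real.exp y - Sy)|
      ≤ Real.exp (x - y) * (y ^ (j + 1) * Real.exp y / (j + 1).factorial) := by
    rw [abs_mul, abs_of_pos hE, abs_of_nonneg hy0]
    exact mul_le_mul_of_nonneg_left hy1 hE.le
  have h3 : Real.exp (x - y) * (y ^ (j + 1) * Real.exp y / (j + 1).factorial)
      = y ^ (j + 1) * Real.exp x / (j + 1).factorial := by
    rw [Real.exp_sub]
    have := Real.exp_pos y
    field_simp
  have hxy' : x ^ (j + 1) ≤ y ^ (j + 1) := pow_le_pow_left₀ hx hxy _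
  have hfac : (0:ℝ) < (j + 1).factorial := by exact_mod_cast (j + 1).factorial_pos
  have hexp : (0:ℝ) < Real.exp x := Real.exp_pos x
  calc |(Sx - Real.exp x) + Real.exp (x - y) * (Real.exp y - Sy)|
      ≤ |Sx - Real.exp x| + |Real.exp (x - y) * (Real.exp y - Sy)| := abs_add_le _ _
    _ ≤ x ^ (j + 1) * Real.exp x / (j + 1).factorial
        + y ^ (j + 1) * Real.exp x / (j + 1).factorial := by
        rw [← h3]; exact add_le_add h1 h2
    _ ≤ 2 * y ^ (j + 1) * Real.exp x / (j + 1).factorial := by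
        rw [← add_div, div_le_div_iff_of_pos_right hfac]
        nlinarith [mul_le_mul_of_nonneg_right hxy' hexp.le]
end

section
/- Let λ > 0, d > 0 and b ∈ ℝ, and define K : ℝ → ℝ by K(s) = e^{s·b}/(s + λ·(1 − e^{s·d})) (note the denominator equals −λe^{−λd} ≠ 0 at s = −λ, so K is smooth in a neighborhood of −λ). Then for every n ∈ ℕ, the n-th derivative of K at −λ equals −(n!/λ^{n+1}) · Σ_{k=0}^{n} (λ·(b − (n+1−k)·d))^{k}/k! · e^{−λ·(b − (n+1−k)·d)}. -/
open Filter Topology Finset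
open scoped ContDiff

private lemma iterOpen {n : ℕ} {f : ℝ → ℝ} {s : Set ℝ} (hs : IsOpen s) {x : ℝ} (hx : x ∈ s) :
    iteratedDerivWithin n f s x = iteratedDeriv n f x := by
  rw [iteratedDerivWithin_eq_iteratedFDerivWithin, iteratedDeriv_eq_iteratedFDeriv,
    iteratedFDerivWithin_of_isOpen n hs hx]

private lemma iter_add_at {n : ℕ} {f g : ℝ → ℝ} {x : ℝ}
    (hf : ContDiffAt ℝ n f x) (hg : ContDiffAt ℝ n g x) :
    iteratedDeriv n (fun s => f s + g s) x = iteratedDeriv n f x + iteratedDeriv n g x := by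
  obtain ⟨u, hu, hfu⟩ := hf.contDiffOn le_rfl (by simp)
  obtain ⟨v, hv, hgv⟩ := hg.contDiffOn le_rfl (by simp)
  obtain ⟨t, hts, hto, hxt⟩ := mem_nhds_iff.mp (Filter.inter_mem hu hv)
  rw [← iterOpen (f := fun s => f s + g s) hto hxt, ← iterOpen (f := f) hto hxt,
    ← iterOpen (f := g) hto hxt]
  exact iteratedDerivWithin_add hxt hto.uniqueDiffOn
    ((hfu.mono fun y hy => (hts hy).1) x hxt) ((hgv.mono fun y hy => (hts hy).2) x hxt)

private lemma iter_cmul {n : ℕ} {f : ℝ → ℝ} (hf : ContDiff ℝ n f) (c x : ℝ) :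
    iteratedDeriv n (fun s => c * f s) x = c * iteratedDeriv n f x := by
  rw [← iteratedDerivWithin_univ, ← iteratedDerivWithin_univ,
    iteratedDerivWithin_const_mul (Set.mem_univ x) uniqueDiffOn_univ c hf.contDiffAt.contDiffWithinAt]

private lemma iter_zero (n : ℕ) (x : ℝ) : iteratedDeriv n (fun _ : ℝ => (0:ℝ)) x = 0 := by
  induction n generalizing x with
  | zero => simp
  | succ n ih => rw [iteratedDeriv_succ', deriv_const']; exact ih x

private lemma iter_sum {n : ℕ} {ι : Type*} (F : Finset ι) (f : ι → ℝ → ℝ)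
    (hf : ∀ i ∈ F, ContDiff ℝ n (f i)) (x : ℝ) :
    iteratedDeriv n (fun s => ∑ i ∈ F, f i s) x = ∑ i ∈ F, iteratedDeriv n (f i) x := by
  classical
  induction F using Finset.induction with
  | empty => simpa using iter_zero n x
  | insert a F hi ih =>
    rw [Finset.sum_insert hi]
    simp only [Finset.sum_insert hi]
    rw [← ih fun i hi => hf i (Finset.mem_insert_of_mem hi)]
    exact iter_add_at (hf a (Finset.mem_insert_self a F)).contDiffAt
      (ContDiff.sum fun i hi => hf i (Finset.mem_insert_of_mem hi)).contDiffAt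

private lemma rem_zero : ∀ (n : ℕ) {m : ℕ} {Q : ℝ → ℝ} {a : ℝ}, n < m → ContDiffAt ℝ ω Q a →
    iteratedDeriv n (fun s => Q s * (s - a) ^ m) a = 0 := by
  intro n
  induction n with
  | zero =>
    intro m Q a hm hQ
    simp [zero_pow (by omega : m ≠ 0)]
  | succ n ih =>
    intro m Q a hm hQ
    obtain ⟨m, rfl⟩ : ∃ m', m = m' + 1 := ⟨m - 1, by omega⟩
    obtain ⟨u, hu, hQu⟩ := hQ.contDiffOn (le_refl ω) (fun _ => rfl)
    obtain ⟨t, hts, hto, hat⟩ := mem_nhds_iff.mp hu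
    have hQt : ContDiffOn ℝ ω Q t := hQu.mono hts
    have hQd : ContDiffOn ℝ ω (deriv Q) t := hQt.deriv_of_isOpen hto (by simp)
    have hev : deriv (fun s => Q s * (s - a) ^ (m + 1)) =ᶠ[𝓝 a]
        fun s => (deriv Q s * (s - a) + ((m : ℝ) + 1) * Q s) * (s - a) ^ m := by
      filter_upwards [hto.mem_nhds hat] with y hy
      have hdy : DifferentiableAt ℝ Q y :=
        ((hQt.differentiableOn (by simp)) y hy).differentiableAt (hto.mem_nhds hy)
      have h1 : HasDerivAt (fun s => Q s * (s - a) ^ (m + 1))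
          (deriv Q y * (y - a) ^ (m + 1) +
            Q y * ((↑(m + 1) : ℝ) * (y - a) ^ m * 1)) y :=
        hdy.hasDerivAt.mul (((hasDerivAt_id y).sub_const a).pow (m + 1))
      rw [h1.deriv]; push_cast; ring
    rw [iteratedDeriv_succ', Filter.EventuallyEq.iteratedDeriv_eq n hev]
    exact ih (by omega)
      (((hQd.contDiffAt (hto.mem_nhds hat)).mul
          (contDiffAt_id.sub contDiffAt_const)).add
        (contDiffAt_const.mul (hQt.contDiffAt (hto.mem_nhds hat))))

private lemma iter_exp_pow (lam : ℝ) :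
    ∀ (n m : ℕ) (c : ℝ), m ≤ n →
      iteratedDeriv n (fun s => Real.exp (s * c) * (s + lam) ^ m) (-lam) =
        (n.descFactorial m : ℝ) * c ^ (n - m) * Real.exp (-lam * c) := by
  intro n
  induction n with
  | zero =>
    intro m c hm
    interval_cases m
    simp [neg_mul]
  | succ n ih =>
    intro m c hm
    have hsm1 : ContDiff ℝ n (fun s : ℝ => Real.exp (s * c) * (s + lam) ^ m) :=
      (Real.contDiff_exp.comp (contDiff_id.mul contDiff_const)).mul
        ((contDiff_id.add contDiff_const).pow m)
    have hsm2 : ContDiff ℝ n (fun s : ℝ => Real.exp (s * c) * (s + lam) ^ (m - 1)) :=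
      (Real.contDiff_exp.comp (contDiff_id.mul contDiff_const)).mul
        ((contDiff_id.add contDiff_const).pow (m - 1))
    have hderiv : deriv (fun s => Real.exp (s * c) * (s + lam) ^ m) =
        fun s => c * (Real.exp (s * c) * (s + lam) ^ m) +
          (m : ℝ) * (Real.exp (s * c) * (s + lam) ^ (m - 1)) := by
      funext s
      have h : HasDerivAt (fun s => Real.exp (s * c) * (s + lam) ^ m)
          (Real.exp (s * c) * (1 * c) * (s + lam) ^ m +
            Real.exp (s * c) * ((m : ℝ) * (s + lam) ^ (m - 1) * 1)) s :=
        (((hasDerivAt_id s).mul_const c).exp).mul (((hasDerivAt_id s).add_const lam).pow m)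
      rw [h.deriv]; ring
    rw [iteratedDeriv_succ', hderiv,
      iter_add_at (contDiff_const.mul hsm1).contDiffAt (contDiff_const.mul hsm2).contDiffAt,
      iter_cmul hsm1, iter_cmul hsm2]
    by_cases hm' : m ≤ n
    · rw [ih m c hm', ih (m - 1) c (by omega)]
      rcases m with _ | m
      · simp; ring
      · simp only [Nat.add_sub_cancel]
        have key : (((n + 1).descFactorial (m + 1) : ℕ) : ℝ) =
            ((n.descFactorial (m + 1) : ℕ) : ℝ) + ((m : ℝ) + 1) * (n.descFactorial m : ℕ) := by
          rw [Nat.succ_descFactorial_succ, Nat.descFactorial_succ]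
          push_cast [Nat.cast_sub (show m ≤ n by omega)]
          ring
        have hpow : c * c ^ (n - (m + 1)) = c ^ (n - m) := by
          rw [← pow_succ']
          congr 1
          omega
        have hnm : n + 1 - (m + 1) = n - m := by omega
        rw [hnm, key]
        have hnm2 : n - m = n - (m + 1) + 1 := by omega
        rw [hnm2, pow_succ']
        push_cast
        ring
    · have hm'' : m = n + 1 := by omega
      subst hm''
      have hzero : iteratedDeriv n (fun s => Real.exp (s * c) * (s + lam) ^ (n + 1)) (-lam) = 0 := by
        have hfun : (fun s : ℝ => Real.exp (s * c) * (s + lam) ^ (n + 1)) =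
            fun s => Real.exp (s * c) * (s - (-lam)) ^ (n + 1) := by
          funext s; rw [sub_neg_eq_add]
        rw [hfun]
        exact rem_zero n (by omega)
          (Real.contDiff_exp.comp (contDiff_id.mul contDiff_const)).contDiffAt
      rw [hzero, Nat.add_sub_cancel, ih n c le_rfl]
      rw [Nat.succ_descFactorial_succ, Nat.sub_self, Nat.descFactorial_self, pow_zero]
      simp only [Nat.sub_self, pow_zero]
      push_cast
      ring

private lemma sum_mul_g (lam d b : ℝ) :
    ∀ (n : ℕ) (s : ℝ),
      (∑ m ∈ Finset.range (n + 1),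
          lam ^ (n - m) * (Real.exp (s * (b - ((m : ℝ) + 1) * d)) * (s + lam) ^ m)) *
        (s + lam * (1 - Real.exp (s * d)))
      = Real.exp (s * (b - ((n : ℝ) + 1) * d)) * (s + lam) ^ (n + 1) -
          lam ^ (n + 1) * Real.exp (s * b) := by
  intro n
  induction n with
  | zero =>
    intro s
    have h1 : Real.exp (s * (b - d)) * Real.exp (s * d) = Real.exp (s * b) := by
      rw [← Real.exp_add]; ring_nf
    simp only [Finset.sum_range_one, Nat.cast_zero, Nat.sub_zero, pow_zero, one_mul, zero_add,
      pow_one]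
    linear_combination (-lam) * h1
  | succ n ih =>
    intro s
    have hsplit : (∑ m ∈ Finset.range (n + 2),
        lam ^ (n + 1 - m) * (Real.exp (s * (b - ((m : ℝ) + 1) * d)) * (s + lam) ^ m)) =
        lam * (∑ m ∈ Finset.range (n + 1),
          lam ^ (n - m) * (Real.exp (s * (b - ((m : ℝ) + 1) * d)) * (s + lam) ^ m)) +
        Real.exp (s * (b - ((n : ℝ) + 1 + 1) * d)) * (s + lam) ^ (n + 1) := by
      rw [Finset.sum_range_succ, Finset.mul_sum]
      congr 1
      · refine Finset.sum_congr rfl fun m hm => ?_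
        have hmn : m ≤ n := by simpa [Nat.lt_succ_iff] using hm
        rw [show n + 1 - m = (n - m) + 1 by omega, pow_succ']
        ring
      · rw [Nat.sub_self, pow_zero, one_mul]
        push_cast
        ring_nf
    have h1 : Real.exp (s * (b - ((n : ℝ) + 1 + 1) * d)) * Real.exp (s * d) =
        Real.exp (s * (b - ((n : ℝ) + 1) * d)) := by
      rw [← Real.exp_add]; ring_nf
    push_cast
    rw [hsplit]
    linear_combination lam * ih s - lam * (s + lam) ^ (n + 1) * h1

/-- Closed form for the higher derivatives at `-λ` of
`K(s) = e^{s b} / (s + λ (1 - e^{s d}))`, the key residue computation for the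
w-function of an M/D/1 queue with a step cost function. -/
theorem iteratedDeriv_md1_kernel (lam d b : ℝ) (hlam : 0 < lam) (hd : 0 < d) :
    ∀ n : ℕ,
      iteratedDeriv n (fun s : ℝ => Real.exp (s * b) / (s + lam * (1 - Real.exp (s * d))))
          (-lam) =
        -((n.factorial : ℝ) / lam ^ (n + 1)) *
          ∑ k ∈ Finset.range (n + 1),
            (lam * (b - ((n : ℝ) + 1 - k) * d)) ^ k / k.factorial *
              Real.exp (-(lam * (b - ((n : ℝ) + 1 - k) * d))) := by
  intro n
  have hlne : lam ≠ 0 := hlam.ne'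
  have hgsm : ContDiff ℝ ω (fun s : ℝ => s + lam * (1 - Real.exp (s * d))) :=
    contDiff_id.add (contDiff_const.mul
      (contDiff_const.sub (Real.contDiff_exp.comp (contDiff_id.mul contDiff_const))))
  have hgne : (-lam) + lam * (1 - Real.exp ((-lam) * d)) ≠ 0 := by
    have h : (-lam) + lam * (1 - Real.exp ((-lam) * d)) = -(lam * Real.exp ((-lam) * d)) := by
      ring
    rw [h]
    have : 0 < lam * Real.exp ((-lam) * d) := by positivity
    exact neg_ne_zero.mpr this.ne'
  have hev : ∀ᶠ s in 𝓝 (-lam), s + lam * (1 - Real.exp (s * d)) ≠ 0 :=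
    hgsm.continuous.continuousAt.eventually_ne hgne
  set Q : ℝ → ℝ := fun s =>
      Real.exp (s * (b - ((n : ℝ) + 1) * d)) /
        (lam ^ (n + 1) * (s + lam * (1 - Real.exp (s * d)))) with hQdef
  set T : ℕ → ℝ → ℝ := fun m s =>
    -(lam ^ (n - m)) / lam ^ (n + 1) * (Real.exp (s * (b - ((m : ℝ) + 1) * d)) * (s + lam) ^ m)
    with hTdef
  have hTsm : ∀ m, ContDiff ℝ (n : ℕ∞) (T m) := fun m =>
    contDiff_const.mul ((Real.contDiff_exp.comp (contDiff_id.mul contDiff_const)).mul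
      ((contDiff_id.add contDiff_const).pow m))
  have hQsm : ContDiffAt ℝ ω Q (-lam) := by
    refine ContDiffAt.div ?_ ?_ ?_
    · exact (Real.contDiff_exp.comp (contDiff_id.mul contDiff_const)).contDiffAt
    · exact (contDiff_const.mul hgsm).contDiffAt
    · exact mul_ne_zero (pow_ne_zero _ hlne) hgne
  have hPat : ContDiffAt ℝ (n : ℕ∞) (fun s : ℝ => ∑ m ∈ Finset.range (n + 1), T m s) (-lam) :=
    (ContDiff.sum fun m _ => hTsm m).contDiffAt
  have hrem : ContDiffAt ℝ (n : ℕ∞) (fun s : ℝ => Q s * (s - (-lam)) ^ (n + 1)) (-lam) :=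
    (hQsm.of_le le_top).mul ((contDiffAt_id.sub contDiffAt_const).pow (n + 1))
  have hKP : (fun s : ℝ => Real.exp (s * b) / (s + lam * (1 - Real.exp (s * d)))) =ᶠ[𝓝 (-lam)]
      fun s => (∑ m ∈ Finset.range (n + 1), T m s) + Q s * (s - (-lam)) ^ (n + 1) := by
    filter_upwards [hev] with s hs
    have hmg := sum_mul_g lam d b n s
    set S : ℝ := ∑ m ∈ Finset.range (n + 1),
      lam ^ (n - m) * (Real.exp (s * (b - ((m : ℝ) + 1) * d)) * (s + lam) ^ m) with hSdef
    have hP : (∑ m ∈ Finset.range (n + 1), T m s) = -1 / lam ^ (n + 1) * S := by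
      rw [hSdef, Finset.mul_sum]
      exact Finset.sum_congr rfl fun m _ => by rw [hTdef]; ring
    have key : Real.exp (s * (b - ((n : ℝ) + 1) * d)) * (s + lam) ^ (n + 1) =
        S * (s + lam * (1 - Real.exp (s * d))) + lam ^ (n + 1) * Real.exp (s * b) := by
      linear_combination -hmg
    have e1pow : Q s * (s - (-lam)) ^ (n + 1) =
        S / lam ^ (n + 1) + Real.exp (s * b) / (s + lam * (1 - Real.exp (s * d))) := by
      simp only [hQdef]
      rw [sub_neg_eq_add, div_mul_eq_mul_div, key, add_div,
        mul_div_mul_right _ _ hs, mul_div_mul_left _ _ (pow_ne_zero (n + 1) hlne)]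
    rw [hP, e1pow]
    ring
  have h1 : iteratedDeriv n
        (fun s : ℝ => Real.exp (s * b) / (s + lam * (1 - Real.exp (s * d)))) (-lam)
      = iteratedDeriv n (fun s : ℝ => ∑ m ∈ Finset.range (n + 1), T m s) (-lam)
        + iteratedDeriv n (fun s : ℝ => Q s * (s - (-lam)) ^ (n + 1)) (-lam) :=
    (Filter.EventuallyEq.iteratedDeriv_eq n hKP).trans (iter_add_at hPat hrem)
  rw [h1, rem_zero n (by omega) hQsm, add_zero,
    iter_sum (Finset.range (n + 1)) T (fun m _ => hTsm m) (-lam)]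
  have hterm : ∀ m ∈ Finset.range (n + 1), iteratedDeriv n (T m) (-lam) =
      -(lam ^ (n - m)) / lam ^ (n + 1) *
        ((n.descFactorial m : ℝ) * (b - ((m : ℝ) + 1) * d) ^ (n - m) *
          Real.exp (-lam * (b - ((m : ℝ) + 1) * d))) := by
    intro m hm
    have hf : ContDiff ℝ (n : ℕ∞)
        (fun s : ℝ => Real.exp (s * (b - ((m : ℝ) + 1) * d)) * (s + lam) ^ m) :=
      (Real.contDiff_exp.comp (contDiff_id.mul contDiff_const)).mul
        ((contDiff_id.add contDiff_const).pow m)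
    simp only [hTdef]
    rw [iter_cmul hf, iter_exp_pow lam n m _ (by simpa [Nat.lt_succ_iff] using hm)]
  rw [Finset.sum_congr rfl hterm, Finset.mul_sum,
    ← Finset.sum_range_reflect (fun k => -((n.factorial : ℝ) / lam ^ (n + 1)) *
      ((lam * (b - ((n : ℝ) + 1 - k) * d)) ^ k / k.factorial *
        Real.exp (-(lam * (b - ((n : ℝ) + 1 - k) * d))))) (n + 1)]
  refine Finset.sum_congr rfl fun m hm => ?_
  have hmn : m ≤ n := by simpa [Nat.lt_succ_iff] using hm
  have hidx : n + 1 - 1 - m = n - m := by omega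
  rw [hidx]
  have hc : (n : ℝ) + 1 - ((n - m : ℕ) : ℝ) = (m : ℝ) + 1 := by
    push_cast [Nat.cast_sub hmn]; ring
  rw [hc]
  have hfac : ((n.factorial : ℕ) : ℝ) = ((n - m).factorial : ℝ) * (n.descFactorial m : ℝ) := by
    exact_mod_cast congrArg (Nat.cast (R := ℝ)) (Nat.factorial_mul_descFactorial hmn).symm
  have hexp : Real.exp (-lam * (b - ((m : ℝ) + 1) * d)) =
      Real.exp (-(lam * (b - ((m : ℝ) + 1) * d))) := by rw [neg_mul]
  rw [hexp, mul_pow, hfac]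
  have hfne : ((n - m).factorial : ℝ) ≠ 0 := Nat.cast_ne_zero.mpr (Nat.factorial_ne_zero _)
  field_simp
end

section
/- Fix λ > 0 and ρ ∈ (0,1), let n ∈ ℕ, and let μ be a probability measure on [0,∞) with finite (n+1)-st moment, with moments m_j = ∫ x^j dμ(x). Let c : ℝ → ℝ be (n+1)-times continuously differentiable and suppose there are reals A ≤ B with A ≤ c^{(n+1)}(t) ≤ B for all t ≥ 0. Then for every u ≥ 0, the w-function W_c satisfies P_n(u) + (λ/(1−ρ))·A·R_n(u) ≤ W_c(u) ≤ P_n(u) + (λ/(1−ρ))·B·R_n(u), where P_n(u) = (λ/(1−ρ)) · Σ_{k=0}^{n} ( Σ_{t=0}^{n−k} (m_t/t!)·c^{(k+t)}(0) ) · u^{k+1}/(k+1)! and R_n(u) = Σ_{k=0}^{n+1} (m_{n+1−k}/(n+1−k)!) · u^{k+1}/(k+1)!. -/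
open MeasureTheory intervalIntegral

lemma iterWithin_eq {N : ℕ} {c : ℝ → ℝ} (hc : ContDiff ℝ N c) {s : Set ℝ}
    (hs : UniqueDiffOn ℝ s) {j : ℕ} (hj : j ≤ N) {x : ℝ} (hx : x ∈ s) :
    iteratedDerivWithin j c s x = iteratedDeriv j c x := by
  have h := (contDiff_iff_ftaylorSeries.mp hc).hasFTaylorSeriesUpToOn s
  have h2 := h.eq_iteratedFDerivWithin_of_uniqueDiffOn (m := j) (by exact_mod_cast hj) hs hx
  rw [iteratedDerivWithin_eq_iteratedFDerivWithin, iteratedDeriv_eq_iteratedFDeriv, ← h2]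
  rfl

lemma taylor_bound {n : ℕ} {c : ℝ → ℝ} (hc : ContDiff ℝ (n+1) c) {A B : ℝ}
    (hA : ∀ t : ℝ, 0 ≤ t → A ≤ iteratedDeriv (n + 1) c t)
    (hB : ∀ t : ℝ, 0 ≤ t → iteratedDeriv (n + 1) c t ≤ B)
    {y : ℝ} (hy : 0 ≤ y) :
    A * (y ^ (n+1) / (n+1).factorial) ≤
      c y - ∑ j ∈ Finset.range (n+1), iteratedDeriv j c 0 * y ^ j / j.factorial ∧
    c y - ∑ j ∈ Finset.range (n+1), iteratedDeriv j c 0 * y ^ j / j.factorial ≤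
      B * (y ^ (n+1) / (n+1).factorial) := by
  rcases eq_or_lt_of_le hy with h0 | hy'
  · subst h0
    have hsum : ∑ j ∈ Finset.range (n+1), iteratedDeriv j c 0 * (0:ℝ) ^ j / j.factorial = c 0 := by
      rw [Finset.sum_eq_single_of_mem 0 (Finset.mem_range.mpr (Nat.succ_pos n))]
      · simp
      · intro b _ hb
        simp [zero_pow hb]
    rw [hsum]
    simp
  · have hud : UniqueDiffOn ℝ (Set.Icc 0 y) := uniqueDiffOn_Icc hy'
    have hcn : ContDiff ℝ n c := hc.of_le (by exact_mod_cast n.le_succ)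
    have hf : ContDiffOn ℝ n c (Set.Icc 0 y) := hcn.contDiffOn
    have hdiff : DifferentiableOn ℝ (iteratedDerivWithin n c (Set.Icc 0 y)) (Set.Ioo 0 y) := by
      have hd : Differentiable ℝ (iteratedDeriv n c) :=
        hc.differentiable_iteratedDeriv n (by exact_mod_cast lt_add_one n)
      exact hd.differentiableOn.congr fun t ht =>
        iterWithin_eq hc hud n.le_succ (Set.Ioo_subset_Icc_self ht)
    obtain ⟨x', hx', hxeq⟩ := taylor_mean_remainder_lagrange hy'.ne (by rwa [Set.uIcc_of_le hy])
      (by rwa [Set.uIcc_of_le hy, Set.uIoo_of_le hy])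
    rw [Set.uIcc_of_le hy] at hxeq
    rw [Set.uIoo_of_le hy] at hx'
    have hT : taylorWithinEval c n (Set.Icc 0 y) 0 y
        = ∑ j ∈ Finset.range (n+1), iteratedDeriv j c 0 * y ^ j / j.factorial := by
      rw [taylor_within_apply]
      refine Finset.sum_congr rfl fun k hk => ?_
      rw [iterWithin_eq hc hud ((Nat.le_of_lt_succ (Finset.mem_range.mp hk)).trans n.le_succ)
        (Set.left_mem_Icc.mpr hy)]
      rw [smul_eq_mul, sub_zero]
      ring
    have hiter : iteratedDerivWithin (n+1) c (Set.Icc 0 y) x' = iteratedDeriv (n+1) c x' :=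
      iterWithin_eq hc hud le_rfl (Set.mem_Icc_of_Ioo hx')
    rw [hT, hiter, sub_zero] at hxeq
    rw [hxeq]
    have hp : (0:ℝ) ≤ y ^ (n+1) / (n+1).factorial := by positivity
    have hx0 : (0:ℝ) ≤ x' := le_of_lt hx'.1
    constructor
    · calc A * (y ^ (n+1) / (n+1).factorial)
          ≤ iteratedDeriv (n+1) c x' * (y ^ (n+1) / (n+1).factorial) :=
            mul_le_mul_of_nonneg_right (hA x' hx0) hp
        _ = iteratedDeriv (n+1) c x' * y ^ (n+1) / (n+1).factorial := by ring
    · calc iteratedDeriv (n+1) c x' * y ^ (n+1) / (n+1).factorial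
          = iteratedDeriv (n+1) c x' * (y ^ (n+1) / (n+1).factorial) := by ring
        _ ≤ B * (y ^ (n+1) / (n+1).factorial) :=
            mul_le_mul_of_nonneg_right (hB x' hx0) hp

lemma sum_triangle_swap (N : ℕ) (f : ℕ → ℕ → ℝ) :
    ∑ j ∈ Finset.range (N+1), ∑ k ∈ Finset.range (j+1), f j k
      = ∑ k ∈ Finset.range (N+1), ∑ t ∈ Finset.range (N-k+1), f (k+t) k := by
  rw [Finset.sum_sigma', Finset.sum_sigma']
  refine Finset.sum_nbij' (fun p => ⟨p.2, p.1 - p.2⟩) (fun p => ⟨p.1 + p.2, p.1⟩) ?_ ?_ ?_ ?_ ?_ <;>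
    rintro ⟨a1, a2⟩ ha <;>
    simp only [Finset.mem_sigma, Finset.mem_range, Sigma.mk.inj_iff, heq_eq_eq] at *
  · omega
  · omega
  · exact ⟨by omega, trivial⟩
  · exact ⟨trivial, by omega⟩
  · congr 1; omega


/-- Polynomial bounds for the w-function `W_c(u) = (λ/(1−ρ)) ∫₀^u ∫ c(ξ+x) dμ(x) dξ`
induced by a Taylor expansion of the cost function `c` with bounded `(n+1)`-st derivative. -/
theorem w_function_polynomial_bounds (lam ρ : ℝ) (hlam : 0 < lam)
    (hρ0 : 0 < ρ) (hρ1 : ρ < 1) (n : ℕ)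
    (μ : Measure ℝ) [IsProbabilityMeasure μ] (hsupp : μ {x | x < 0} = 0)
    (hmom : Integrable (fun x => x ^ (n + 1)) μ)
    (m : ℕ → ℝ) (hm : ∀ j, m j = ∫ x, x ^ j ∂μ)
    (c : ℝ → ℝ) (hc : ContDiff ℝ (n + 1) c)
    (A B : ℝ) (hAB : A ≤ B)
    (hA : ∀ t : ℝ, 0 ≤ t → A ≤ iteratedDeriv (n + 1) c t)
    (hB : ∀ t : ℝ, 0 ≤ t → iteratedDeriv (n + 1) c t ≤ B)
    (W : ℝ → ℝ) (hW : ∀ v, W v = lam / (1 - ρ) * ∫ ξ in (0 : ℝ)..v, ∫ x, c (ξ + x) ∂μ)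
    (P R : ℝ → ℝ)
    (hP : ∀ v, P v = lam / (1 - ρ) *
      ∑ k ∈ Finset.range (n + 1),
        (∑ t ∈ Finset.range (n - k + 1), m t / t.factorial * iteratedDeriv (k + t) c 0) *
          v ^ (k + 1) / (k + 1).factorial)
    (hR : ∀ v, R v = ∑ k ∈ Finset.range (n + 2),
        m (n + 1 - k) / (n + 1 - k).factorial * v ^ (k + 1) / (k + 1).factorial)
    (u : ℝ) (hu : 0 ≤ u) :
    P u + lam / (1 - ρ) * A * R u ≤ W u ∧ W u ≤ P u + lam / (1 - ρ) * B * R u := by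
  have hC : 0 < lam / (1 - ρ) := div_pos hlam (by linarith)
  have h0 : ∀ᵐ (x : ℝ) ∂μ, 0 ≤ x := by
    rw [ae_iff]
    convert hsupp using 2
    simp [not_le]
  -- integrability of monomials
  have hint : ∀ j, j ≤ n + 1 → Integrable (fun x : ℝ => x ^ j) μ := by
    intro j hj
    refine ((integrable_const (1 : ℝ)).add hmom).mono'
      ((continuous_pow j).aestronglyMeasurable) ?_
    filter_upwards [h0] with x hx
    rw [Real.norm_eq_abs, abs_of_nonneg (pow_nonneg hx _)]
    simp only [Pi.add_apply]
    rcases le_total x 1 with h | h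
    · have h1 : x ^ j ≤ 1 := pow_le_one₀ hx h
      have h2 : (0:ℝ) ≤ x ^ (n + 1) := pow_nonneg hx (n + 1)
      linarith
    · have h1 : x ^ j ≤ x ^ (n + 1) := pow_le_pow_right₀ h hj
      linarith
  -- shifted monomials
  have hshift_int : ∀ j, j ≤ n + 1 → ∀ ξ : ℝ, Integrable (fun x => (ξ + x) ^ j) μ := by
    intro j hj ξ
    have he : (fun x : ℝ => (ξ + x) ^ j)
        = fun x => ∑ k ∈ Finset.range (j + 1), ξ ^ k * x ^ (j - k) * ((j.choose k : ℕ) : ℝ) := by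
      funext x; rw [add_pow]
    rw [he]
    exact integrable_finset_sum _ fun k _ =>
      ((hint (j - k) ((Nat.sub_le j k).trans hj)).const_mul _).mul_const _
  have hshift_val : ∀ j, j ≤ n + 1 → ∀ ξ : ℝ, ∫ x, (ξ + x) ^ j ∂μ
      = ∑ k ∈ Finset.range (j + 1), ξ ^ k * m (j - k) * (j.choose k) := by
    intro j hj ξ
    simp_rw [add_pow]
    rw [integral_finset_sum _ fun k _ =>
      ((hint (j - k) ((Nat.sub_le j k).trans hj)).const_mul _).mul_const _]
    refine Finset.sum_congr rfl fun k _ => ?_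
    rw [MeasureTheory.integral_mul_const, MeasureTheory.integral_const_mul, ← hm]
  -- Taylor polynomial
  set T : ℝ → ℝ := fun y => ∑ j ∈ Finset.range (n+1), iteratedDeriv j c 0 * y ^ j / j.factorial
    with hTdef
  have hTb : ∀ y : ℝ, 0 ≤ y →
      A * (y ^ (n+1) / (n+1).factorial) ≤ c y - T y ∧
        c y - T y ≤ B * (y ^ (n+1) / (n+1).factorial) := fun y hy => taylor_bound hc hA hB hy
  have hTcont : Continuous T := by
    rw [hTdef]
    exact continuous_finset_sum _ fun j _ => (continuous_const.mul (continuous_pow j)).div_const _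
  set M : ℝ := max |A| |B| with hMdef
  have hM0 : 0 ≤ M := le_trans (abs_nonneg A) (le_max_left _ _)
  have hMA : -M ≤ A := by
    have h1 := neg_abs_le A
    have h2 : |A| ≤ M := le_max_left _ _
    linarith
  have hMB : B ≤ M := (le_abs_self B).trans (le_max_right _ _)
  have hgabs : ∀ y : ℝ, 0 ≤ y → |c y - T y| ≤ M * (y ^ (n+1) / (n+1).factorial) := by
    intro y hy
    obtain ⟨h1, h2⟩ := hTb y hy
    have hp : (0:ℝ) ≤ y ^ (n+1) / (n+1).factorial := by positivity
    rw [abs_le]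
    constructor
    · have : (-M) * (y ^ (n+1) / (n+1).factorial) ≤ A * (y ^ (n+1) / (n+1).factorial) :=
        mul_le_mul_of_nonneg_right hMA hp
      nlinarith
    · have : B * (y ^ (n+1) / (n+1).factorial) ≤ M * (y ^ (n+1) / (n+1).factorial) :=
        mul_le_mul_of_nonneg_right hMB hp
      linarith
  -- integrability of the pieces
  have hTint : ∀ ξ : ℝ, Integrable (fun x => T (ξ + x)) μ := by
    intro ξ
    rw [hTdef]
    exact integrable_finset_sum _ fun j hj =>
      ((hshift_int j ((Nat.le_of_lt_succ (Finset.mem_range.mp hj)).trans n.le_succ) ξ).const_mul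
        _).div_const _
  have hpint : ∀ ξ : ℝ, Integrable (fun x => (ξ + x) ^ (n+1) / (n+1).factorial) μ :=
    fun ξ => (hshift_int (n+1) le_rfl ξ).div_const _
  have hcshift_cont : ∀ ξ : ℝ, Continuous fun x : ℝ => c (ξ + x) :=
    fun ξ => hc.continuous.comp (continuous_const.add continuous_id)
  have hgint : ∀ ξ : ℝ, 0 ≤ ξ → Integrable (fun x => c (ξ + x) - T (ξ + x)) μ := by
    intro ξ hξ
    refine Integrable.mono' ((hpint ξ).const_mul M) ?_ ?_
    · exact ((hcshift_cont ξ).sub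
        (hTcont.comp (continuous_const.add continuous_id))).aestronglyMeasurable
    · filter_upwards [h0] with x hx
      rw [Real.norm_eq_abs]
      exact hgabs (ξ + x) (by linarith)
  have hcint : ∀ ξ : ℝ, 0 ≤ ξ → Integrable (fun x => c (ξ + x)) μ := by
    intro ξ hξ
    have h2 := (hTint ξ).add (hgint ξ hξ)
    have he : (fun x => T (ξ + x)) + (fun x => c (ξ + x) - T (ξ + x)) = fun x => c (ξ + x) := by
      funext x; simp
    rwa [he] at h2
  -- inner integral bounds
  have hinner : ∀ ξ : ℝ, 0 ≤ ξ →
      (∫ x, T (ξ + x) ∂μ) + A * ∫ x, (ξ + x) ^ (n+1) / (n+1).factorial ∂μ ≤ ∫ x, c (ξ + x) ∂μ ∧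
      ∫ x, c (ξ + x) ∂μ ≤ (∫ x, T (ξ + x) ∂μ) + B * ∫ x, (ξ + x) ^ (n+1) / (n+1).factorial ∂μ := by
    intro ξ hξ
    have h1 : ∫ x, c (ξ + x) ∂μ = (∫ x, T (ξ + x) ∂μ) + ∫ x, (c (ξ + x) - T (ξ + x)) ∂μ := by
      rw [← integral_add (hTint ξ) (hgint ξ hξ)]
      simp
    rw [h1]
    have hAa : A * ∫ x, (ξ + x) ^ (n+1) / (n+1).factorial ∂μ
        = ∫ x, A * ((ξ + x) ^ (n+1) / (n+1).factorial) ∂μ := (MeasureTheory.integral_const_mul _ _).symm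
    have hBb : B * ∫ x, (ξ + x) ^ (n+1) / (n+1).factorial ∂μ
        = ∫ x, B * ((ξ + x) ^ (n+1) / (n+1).factorial) ∂μ := (MeasureTheory.integral_const_mul _ _).symm
    constructor
    · rw [hAa]
      refine add_le_add_right (integral_mono_ae ((hpint ξ).const_mul A) (hgint ξ hξ) ?_) _
      filter_upwards [h0] with x hx
      exact (hTb (ξ + x) (by linarith)).1
    · rw [hBb]
      refine add_le_add_right (integral_mono_ae (hgint ξ hξ) ((hpint ξ).const_mul B) ?_) _
      filter_upwards [h0] with x hx
      exact (hTb (ξ + x) (by linarith)).2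
  -- explicit polynomial forms of the inner integrals
  set ITp : ℝ → ℝ := fun ξ => ∑ j ∈ Finset.range (n+1),
      iteratedDeriv j c 0 * (∑ k ∈ Finset.range (j+1), ξ ^ k * m (j-k) * (j.choose k))
        / j.factorial with hITp
  set IPp : ℝ → ℝ := fun ξ =>
      (∑ k ∈ Finset.range (n+2), ξ ^ k * m (n+1-k) * ((n+1).choose k)) / (n+1).factorial
    with hIPp
  have hIT : ∀ ξ : ℝ, ∫ x, T (ξ + x) ∂μ = ITp ξ := by
    intro ξ
    rw [hTdef, hITp]
    rw [integral_finset_sum _ fun j hj =>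
      ((hshift_int j ((Nat.le_of_lt_succ (Finset.mem_range.mp hj)).trans n.le_succ) ξ).const_mul
        _).div_const _]
    refine Finset.sum_congr rfl fun j hj => ?_
    rw [MeasureTheory.integral_div, MeasureTheory.integral_const_mul,
      hshift_val j ((Nat.le_of_lt_succ (Finset.mem_range.mp hj)).trans n.le_succ) ξ]
  have hIP : ∀ ξ : ℝ, ∫ x, (ξ + x) ^ (n+1) / (n+1).factorial ∂μ = IPp ξ := by
    intro ξ
    rw [hIPp, MeasureTheory.integral_div, hshift_val (n+1) le_rfl ξ]
  have hITcont : Continuous ITp := by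
    rw [hITp]
    exact continuous_finset_sum _ fun j _ => (continuous_const.mul
      (continuous_finset_sum _ fun k _ =>
        ((continuous_pow k).mul continuous_const).mul continuous_const)).div_const _
  have hIPcont : Continuous IPp := by
    rw [hIPp]
    exact (continuous_finset_sum _ fun k _ =>
      ((continuous_pow k).mul continuous_const).mul continuous_const).div_const _
  -- interval integrability of the inner integral
  have hIIc : IntervalIntegrable (fun ξ => ∫ x, c (ξ + x) ∂μ) MeasureTheory.volume 0 u := by
    have hco : ContinuousOn (fun ξ => ∫ x, c (ξ + x) ∂μ) (Set.Icc 0 u) := by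
      refine MeasureTheory.continuousOn_of_dominated
        (bound := fun x => (∑ j ∈ Finset.range (n+1),
            |iteratedDeriv j c 0| * (u + x) ^ j / j.factorial)
          + M * ((u + x) ^ (n+1) / (n+1).factorial)) ?_ ?_ ?_ ?_
      · intro ξ _
        exact (hcshift_cont ξ).aestronglyMeasurable
      · intro ξ hξ
        filter_upwards [h0] with x hx
        have hy0 : 0 ≤ ξ + x := add_nonneg hξ.1 hx
        have hyu : ξ + x ≤ u + x := add_le_add_left hξ.2 x
        have hux : (0:ℝ) ≤ u + x := le_trans hy0 hyu
        rw [Real.norm_eq_abs]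
        have habs : |c (ξ + x)| ≤ |T (ξ + x)| + |c (ξ + x) - T (ξ + x)| := by
          have h3 := abs_add_le (T (ξ + x)) (c (ξ + x) - T (ξ + x))
          simpa using h3
        have hTabs : |T (ξ + x)| ≤ ∑ j ∈ Finset.range (n+1),
            |iteratedDeriv j c 0| * (u + x) ^ j / j.factorial := by
          rw [hTdef]
          refine (Finset.abs_sum_le_sum_abs _ _).trans (Finset.sum_le_sum fun j _ => ?_)
          rw [abs_div, abs_mul, Nat.abs_cast, abs_pow, abs_of_nonneg hy0]
          gcongr
        have hgabs2 : |c (ξ + x) - T (ξ + x)| ≤ M * ((u + x) ^ (n+1) / (n+1).factorial) := by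
          refine (hgabs (ξ + x) hy0).trans ?_
          gcongr
        linarith
      · refine MeasureTheory.Integrable.add (integrable_finset_sum _ fun j hj =>
          ((hshift_int j ((Nat.le_of_lt_succ (Finset.mem_range.mp hj)).trans n.le_succ)
            u).const_mul _).div_const _) (((hshift_int (n+1) le_rfl u).div_const _).const_mul M)
      · filter_upwards with x
        exact (hc.continuous.comp (continuous_id.add continuous_const)).continuousOn
    exact ContinuousOn.intervalIntegrable (by rwa [Set.uIcc_of_le hu])
  -- comparison of interval integrals
  have hlow : ∫ ξ in (0:ℝ)..u, (ITp ξ + A * IPp ξ) ≤ ∫ ξ in (0:ℝ)..u, ∫ x, c (ξ + x) ∂μ := by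
    refine intervalIntegral.integral_mono_on hu
      ((hITcont.add (continuous_const.mul hIPcont)).intervalIntegrable _ _) hIIc fun ξ hξ => ?_
    have h4 := (hinner ξ hξ.1).1
    rwa [hIT ξ, hIP ξ] at h4
  have hhigh : ∫ ξ in (0:ℝ)..u, ∫ x, c (ξ + x) ∂μ ≤ ∫ ξ in (0:ℝ)..u, (ITp ξ + B * IPp ξ) := by
    refine intervalIntegral.integral_mono_on hu hIIc
      ((hITcont.add (continuous_const.mul hIPcont)).intervalIntegrable _ _) fun ξ hξ => ?_
    have h4 := (hinner ξ hξ.1).2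
    rwa [hIT ξ, hIP ξ] at h4
  -- values of the interval integrals of the polynomial parts
  have hfac : ∀ j : ℕ, ((j.factorial : ℕ) : ℝ) ≠ 0 :=
    fun j => Nat.cast_ne_zero.mpr (Nat.factorial_ne_zero _)
  have hPeq : lam / (1 - ρ) * ∫ ξ in (0:ℝ)..u, ITp ξ = P u := by
    rw [hITp, hP u]
    congr 1
    rw [intervalIntegral.integral_finset_sum fun j _ => (show Continuous fun ξ : ℝ =>
      iteratedDeriv j c 0 * (∑ k ∈ Finset.range (j+1),
            ξ ^ k * m (j-k) * ((j.choose k : ℕ) : ℝ)) / (j.factorial : ℝ) from (continuous_const.mul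
      (continuous_finset_sum _ fun k _ =>
        ((continuous_pow k).mul continuous_const).mul continuous_const)).div_const
          _).intervalIntegrable _ _]
    have hstep : ∀ j ∈ Finset.range (n+1),
        (∫ ξ in (0:ℝ)..u, iteratedDeriv j c 0
            * (∑ k ∈ Finset.range (j+1), ξ ^ k * m (j-k) * (j.choose k)) / j.factorial)
        = ∑ k ∈ Finset.range (j+1),
            iteratedDeriv j c 0 * (u ^ (k+1) / (k+1) * m (j-k) * (j.choose k)) / j.factorial := by
      intro j _
      rw [intervalIntegral.integral_div, intervalIntegral.integral_const_mul,
        intervalIntegral.integral_finset_sum fun k _ =>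
          (show Continuous fun ξ : ℝ => ξ ^ k * m (j-k) * ((j.choose k : ℕ) : ℝ) from
            ((continuous_pow k).mul continuous_const).mul continuous_const).intervalIntegrable _ _]
      rw [Finset.mul_sum, Finset.sum_div]
      refine Finset.sum_congr rfl fun k _ => ?_
      rw [intervalIntegral.integral_mul_const, intervalIntegral.integral_mul_const, integral_pow,
        zero_pow (Nat.succ_ne_zero k)]
      ring_nf
    rw [Finset.sum_congr rfl hstep]
    rw [sum_triangle_swap n (fun j k =>
      iteratedDeriv j c 0 * (u ^ (k+1) / (k+1) * m (j-k) * (j.choose k)) / j.factorial)]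
    refine Finset.sum_congr rfl fun k hk => ?_
    rw [Finset.sum_mul, Finset.sum_div]
    refine Finset.sum_congr rfl fun t ht => ?_
    have hsub : k + t - k = t := by omega
    have hch : (((k+t).choose k : ℕ) : ℝ)
        = (k+t).factorial / (k.factorial * t.factorial) := by
      rw [Nat.cast_choose ℝ (Nat.le_add_right k t), hsub]
    rw [hsub, hch, Nat.factorial_succ]
    have h1 := hfac (k+t)
    have h2 := hfac k
    have h3 := hfac t
    have h4 : ((k:ℝ) + 1) ≠ 0 := by positivity
    push_cast
    field_simp
  have hReq : ∫ ξ in (0:ℝ)..u, IPp ξ = R u := by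
    rw [hIPp, hR u, intervalIntegral.integral_div,
      intervalIntegral.integral_finset_sum fun k _ =>
        (show Continuous fun ξ : ℝ => ξ ^ k * m (n+1-k) * (((n+1).choose k : ℕ) : ℝ) from
          ((continuous_pow k).mul continuous_const).mul continuous_const).intervalIntegrable _ _,
      Finset.sum_div]
    refine Finset.sum_congr rfl fun k hk => ?_
    have hk' : k ≤ n + 1 := Nat.le_of_lt_succ (Finset.mem_range.mp hk)
    rw [intervalIntegral.integral_mul_const, intervalIntegral.integral_mul_const, integral_pow,
      zero_pow (Nat.succ_ne_zero k)]
    have hch : (((n+1).choose k : ℕ) : ℝ)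
        = (n+1).factorial / (k.factorial * (n+1-k).factorial) := Nat.cast_choose ℝ hk'
    rw [hch, Nat.factorial_succ k]
    have h1 := hfac (n+1)
    have h2 := hfac k
    have h3 := hfac (n+1-k)
    have h4 : ((k:ℝ) + 1) ≠ 0 := by positivity
    push_cast
    field_simp
    ring
  -- assembly
  have hsplitL : ∫ ξ in (0:ℝ)..u, (ITp ξ + A * IPp ξ)
      = (∫ ξ in (0:ℝ)..u, ITp ξ) + A * ∫ ξ in (0:ℝ)..u, IPp ξ := by
    rw [intervalIntegral.integral_add (hITcont.intervalIntegrable _ _)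
      ((show Continuous fun ξ => A * IPp ξ from continuous_const.mul hIPcont).intervalIntegrable _ _),
      intervalIntegral.integral_const_mul]
  have hsplitU : ∫ ξ in (0:ℝ)..u, (ITp ξ + B * IPp ξ)
      = (∫ ξ in (0:ℝ)..u, ITp ξ) + B * ∫ ξ in (0:ℝ)..u, IPp ξ := by
    rw [intervalIntegral.integral_add (hITcont.intervalIntegrable _ _)
      ((show Continuous fun ξ => B * IPp ξ from continuous_const.mul hIPcont).intervalIntegrable _ _),
      intervalIntegral.integral_const_mul]
  rw [hW u, ← hPeq, ← hReq]
  constructor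
  · calc (lam / (1 - ρ) * ∫ ξ in (0:ℝ)..u, ITp ξ)
          + lam / (1 - ρ) * A * ∫ ξ in (0:ℝ)..u, IPp ξ
        = lam / (1 - ρ) * ∫ ξ in (0:ℝ)..u, (ITp ξ + A * IPp ξ) := by rw [hsplitL]; ring
      _ ≤ lam / (1 - ρ) * ∫ ξ in (0:ℝ)..u, ∫ x, c (ξ + x) ∂μ :=
        mul_le_mul_of_nonneg_left hlow hC.le
  · calc lam / (1 - ρ) * ∫ ξ in (0:ℝ)..u, ∫ x, c (ξ + x) ∂μ
        ≤ lam / (1 - ρ) * ∫ ξ in (0:ℝ)..u, (ITp ξ + B * IPp ξ) :=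
          mul_le_mul_of_nonneg_left hhigh hC.le
      _ = (lam / (1 - ρ) * ∫ ξ in (0:ℝ)..u, ITp ξ)
          + lam / (1 - ρ) * B * ∫ ξ in (0:ℝ)..u, IPp ξ := by rw [hsplitU]; ring
end

section
/- Fix λ > 0 and ρ ∈ (0,1), let μ be a probability measure on [0,∞), and suppose there is s₀ > 0 with ∫ e^{s₀·x} dμ(x) < ∞. Let a : ℕ → ℝ satisfy |a_n| ≤ C·s₀^n for all n, for some constant C ≥ 0, and define the entire cost function c(x) = Σ_{n=0}^{∞} a_n·x^n/n!. With m_q = ∫ x^q dμ(x), the series y_n = (λ/(1−ρ)) · Σ_{q=0}^{∞} (m_q/q!)·a_{n+q} converges absolutely for every n, and for every u ≥ 0 the series Σ_{n=0}^{∞} y_n·u^{n+1}/(n+1)! converges absolutely and equals the w-function W_c(u). -/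
open MeasureTheory intervalIntegral Finset

lemma pow_div_fact_le_exp {t : ℝ} (ht : 0 ≤ t) (n : ℕ) :
    t ^ n / n.factorial ≤ Real.exp t := by
  calc t ^ n / n.factorial ≤ ∑ i ∈ Finset.range (n+1), t ^ i / i.factorial := by
        refine Finset.single_le_sum (f := fun i => t ^ i / i.factorial) ?_ (Finset.self_mem_range_succ n)
        intro i _; positivity
    _ ≤ Real.exp t := Real.sum_le_exp_of_nonneg ht _

lemma w_aux_mono_int (μ : Measure ℝ) (s₀ : ℝ) (hs₀ : 0 < s₀)
    (hexp : Integrable (fun x => Real.exp (s₀ * x)) μ)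
    (hae : ∀ᵐ x ∂μ, 0 ≤ x) (q : ℕ) :
    Integrable (fun x => x ^ q) μ := by
  refine (hexp.const_mul (q.factorial / s₀ ^ q)).mono' ?_ ?_
  · exact (measurable_id.pow_const q).aestronglyMeasurable
  · filter_upwards [hae] with x hx
    rw [Real.norm_eq_abs, abs_pow, abs_of_nonneg hx]
    have h := pow_div_fact_le_exp (mul_nonneg hs₀.le hx) q
    rw [mul_pow] at h
    have hq : (0:ℝ) < q.factorial := by positivity
    have hsq : (0:ℝ) < s₀ ^ q := by positivity
    rw [div_le_iff₀ hq] at h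
    calc x ^ q = s₀ ^ q * x ^ q / s₀ ^ q := by field_simp
      _ ≤ Real.exp (s₀ * x) * q.factorial / s₀ ^ q := by gcongr
      _ = q.factorial / s₀ ^ q * Real.exp (s₀ * x) := by ring

lemma w_aux_shift_int (μ : Measure ℝ) (s₀ : ℝ) (hs₀ : 0 < s₀)
    (hexp : Integrable (fun x => Real.exp (s₀ * x)) μ)
    (hae : ∀ᵐ x ∂μ, 0 ≤ x) (N : ℕ) (ξ : ℝ) :
    Integrable (fun x => (ξ + x) ^ N) μ := by
  have : (fun x : ℝ => (ξ + x) ^ N)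
      = fun x => ∑ k ∈ Finset.range (N+1), ξ ^ k * x ^ (N-k) * (N.choose k : ℝ) :=
    funext fun x => add_pow ξ x N
  rw [this]
  exact integrable_finset_sum _ fun k _ =>
    (((w_aux_mono_int μ s₀ hs₀ hexp hae (N-k)).const_mul _).mul_const _)

lemma w_aux_I_eq (μ : Measure ℝ) (s₀ : ℝ) (hs₀ : 0 < s₀)
    (hexp : Integrable (fun x => Real.exp (s₀ * x)) μ)
    (hae : ∀ᵐ x ∂μ, 0 ≤ x) (N : ℕ) (ξ : ℝ) :
    (∫ x, (ξ + x) ^ N ∂μ)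
      = ∑ k ∈ Finset.range (N+1), (N.choose k : ℝ) * (∫ x, x ^ (N-k) ∂μ) * ξ ^ k := by
  have h1 : (fun x : ℝ => (ξ + x) ^ N)
      = fun x => ∑ k ∈ Finset.range (N+1), (ξ ^ k * (N.choose k : ℝ)) * x ^ (N-k) := by
    funext x; rw [add_pow]; exact Finset.sum_congr rfl fun k _ => by ring
  rw [h1, integral_finset_sum _ fun k _ =>
    ((w_aux_mono_int μ s₀ hs₀ hexp hae (N-k)).const_mul _)]
  refine Finset.sum_congr rfl fun k _ => ?_
  rw [MeasureTheory.integral_const_mul]; ring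

lemma w_aux_I_nonneg (μ : Measure ℝ) (hae : ∀ᵐ x ∂μ, 0 ≤ x) (N : ℕ) {ξ : ℝ} (hξ : 0 ≤ ξ) :
    0 ≤ ∫ x, (ξ + x) ^ N ∂μ := by
  refine integral_nonneg_of_ae ?_
  filter_upwards [hae] with x hx
  exact pow_nonneg (by linarith) N

lemma w_aux_key (μ : Measure ℝ) (s₀ : ℝ) (hs₀ : 0 < s₀)
    (hexp : Integrable (fun x => Real.exp (s₀ * x)) μ)
    (hae : ∀ᵐ x ∂μ, 0 ≤ x) {ξ : ℝ} (hξ : 0 ≤ ξ) (K : ℕ) :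
    ∑ N ∈ Finset.range K, s₀ ^ N / N.factorial * ∫ x, (ξ + x) ^ N ∂μ
      ≤ Real.exp (s₀ * ξ) * ∫ x, Real.exp (s₀ * x) ∂μ := by
  have h1 : ∀ N ∈ Finset.range K, s₀ ^ N / N.factorial * ∫ x, (ξ + x) ^ N ∂μ
      = ∫ x, s₀ ^ N / N.factorial * (ξ + x) ^ N ∂μ := fun N _ =>
    (MeasureTheory.integral_const_mul _ _).symm
  rw [Finset.sum_congr rfl h1,
    ← integral_finset_sum _ fun N _ => ((w_aux_shift_int μ s₀ hs₀ hexp hae N ξ).const_mul _)]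
  calc (∫ x, ∑ N ∈ Finset.range K, s₀ ^ N / N.factorial * (ξ + x) ^ N ∂μ)
      ≤ ∫ x, Real.exp (s₀ * ξ) * Real.exp (s₀ * x) ∂μ := by
        refine integral_mono_ae
          (integrable_finset_sum _ fun N _ =>
            ((w_aux_shift_int μ s₀ hs₀ hexp hae N ξ).const_mul _))
          (hexp.const_mul _) ?_
        filter_upwards [hae] with x hx
        have hnn : 0 ≤ s₀ * (ξ + x) := mul_nonneg hs₀.le (by linarith)
        have h2 : ∑ N ∈ Finset.range K, s₀ ^ N / N.factorial * (ξ + x) ^ N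
            = ∑ N ∈ Finset.range K, (s₀ * (ξ + x)) ^ N / N.factorial := by
          refine Finset.sum_congr rfl fun N _ => ?_
          rw [mul_pow]; ring
        rw [h2, ← Real.exp_add, ← mul_add]
        exact Real.sum_le_exp_of_nonneg hnn K
    _ = Real.exp (s₀ * ξ) * ∫ x, Real.exp (s₀ * x) ∂μ := MeasureTheory.integral_const_mul _ _

set_option maxHeartbeats 1000000 in
/-- For an entire cost function `c` of exponential type at most `s₀`, where the
waiting-time distribution `μ` has a finite exponential moment `∫ e^{s₀ x} dμ < ∞`,
the filtered coefficient series `y_n = (λ/(1−ρ)) Σ_q (m_q/q!) a_{n+q}` converge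
absolutely, and the power series `Σ_n y_n u^{n+1}/(n+1)!` converges absolutely to
the w-function `W_c(u)` for every `u ≥ 0`. -/
theorem w_function_power_series (lam ρ : ℝ) (hlam : 0 < lam) (hρ0 : 0 < ρ) (hρ1 : ρ < 1)
    (μ : Measure ℝ) [IsProbabilityMeasure μ] (hsupp : μ {x | x < 0} = 0)
    (s₀ : ℝ) (hs₀ : 0 < s₀)
    (hexp : Integrable (fun x => Real.exp (s₀ * x)) μ)
    (C : ℝ) (hC : 0 ≤ C)
    (a : ℕ → ℝ) (ha : ∀ n, |a n| ≤ C * s₀ ^ n)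
    (c : ℝ → ℝ) (hc : ∀ x, c x = ∑' n : ℕ, a n * x ^ n / n.factorial)
    (m : ℕ → ℝ) (hm : ∀ q, m q = ∫ x, x ^ q ∂μ)
    (y : ℕ → ℝ) (hy : ∀ n, y n = lam / (1 - ρ) * ∑' q : ℕ, m q / q.factorial * a (n + q))
    (W : ℝ → ℝ) (hW : ∀ v, W v = lam / (1 - ρ) * ∫ ξ in (0 : ℝ)..v, ∫ x, c (ξ + x) ∂μ) :
    (∀ n : ℕ, Summable fun q : ℕ => |m q / q.factorial * a (n + q)|) ∧
    ∀ u : ℝ, 0 ≤ u →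
      (Summable fun n : ℕ => |y n * u ^ (n + 1) / (n + 1).factorial|) ∧
      ∑' n : ℕ, y n * u ^ (n + 1) / (n + 1).factorial = W u := by
  have hae : ∀ᵐ x ∂μ, 0 ≤ x := by
    rw [ae_iff]
    simpa [not_le] using hsupp
  set L := lam / (1 - ρ) with hL
  have hLpos : 0 < L := div_pos hlam (by linarith)
  set M := ∫ x, Real.exp (s₀ * x) ∂μ with hM
  have hM0 : 0 ≤ M := integral_nonneg fun x => (Real.exp_pos _).le
  have hm0 : ∀ q, 0 ≤ m q := fun q => by
    rw [hm]
    exact integral_nonneg_of_ae (by filter_upwards [hae] with x hx; positivity)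
  have hmI : ∀ q : ℕ, m q = ∫ x, ((0:ℝ) + x) ^ q ∂μ := fun q => by simp [hm]
  -- summability of the exponential-weighted moments
  have hg0 : ∀ q : ℕ, 0 ≤ s₀ ^ q / q.factorial * m q := fun q =>
    mul_nonneg (by positivity) (hm0 q)
  have hgb : ∀ K : ℕ, ∑ q ∈ Finset.range K, s₀ ^ q / q.factorial * m q ≤ M := by
    intro K
    have h := w_aux_key μ s₀ hs₀ hexp hae (le_refl (0:ℝ)) K
    simp only [zero_add, mul_zero, Real.exp_zero, one_mul] at h
    simpa only [← hm] using h
  have hg : Summable fun q => s₀ ^ q / q.factorial * m q :=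
    summable_of_sum_range_le hg0 hgb
  have hgsum : ∑' q, s₀ ^ q / q.factorial * m q ≤ M :=
    Real.tsum_le_of_sum_range_le hg0 hgb
  -- part 1
  have part1 : ∀ n : ℕ, Summable fun q : ℕ => |m q / q.factorial * a (n + q)| := by
    intro n
    refine Summable.of_nonneg_of_le (fun q => abs_nonneg _) ?_ (hg.mul_right (C * s₀ ^ n))
    intro q
    rw [abs_mul, abs_of_nonneg (div_nonneg (hm0 q) (by positivity))]
    calc m q / q.factorial * |a (n + q)| ≤ m q / q.factorial * (C * s₀ ^ (n + q)) := by
          exact mul_le_mul_of_nonneg_left (ha _) (div_nonneg (hm0 q) (by positivity))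
      _ = s₀ ^ q / q.factorial * m q * (C * s₀ ^ n) := by rw [pow_add]; ring
  refine ⟨part1, fun u hu => ?_⟩
  -- bound on |y n|
  have hyb : ∀ n, |y n| ≤ L * (C * s₀ ^ n * M) := by
    intro n
    rw [hy, abs_mul, abs_of_pos hLpos]
    refine mul_le_mul_of_nonneg_left ?_ hLpos.le
    have hsum' : Summable fun q : ℕ => ‖m q / q.factorial * a (n + q)‖ := by
      simpa only [Real.norm_eq_abs] using part1 n
    have h1 := norm_tsum_le_tsum_norm hsum'
    simp only [Real.norm_eq_abs] at h1
    refine h1.trans ?_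
    have h2 : ∑' q : ℕ, |m q / q.factorial * a (n + q)|
        ≤ ∑' q : ℕ, s₀ ^ q / q.factorial * m q * (C * s₀ ^ n) := by
      refine (part1 n).tsum_le_tsum ?_ (hg.mul_right _)
      intro q
      rw [abs_mul, abs_of_nonneg (div_nonneg (hm0 q) (by positivity))]
      calc m q / q.factorial * |a (n + q)| ≤ m q / q.factorial * (C * s₀ ^ (n + q)) :=
            mul_le_mul_of_nonneg_left (ha _) (div_nonneg (hm0 q) (by positivity))
        _ = s₀ ^ q / q.factorial * m q * (C * s₀ ^ n) := by rw [pow_add]; ring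
    refine h2.trans ?_
    rw [tsum_mul_right]
    calc (∑' q, s₀ ^ q / q.factorial * m q) * (C * s₀ ^ n)
        ≤ M * (C * s₀ ^ n) := by
          refine mul_le_mul_of_nonneg_right hgsum (by positivity)
      _ = C * s₀ ^ n * M := by ring
  -- summability of the power series
  have hterm : ∀ n : ℕ, |y n * u ^ (n + 1) / (n + 1).factorial|
      ≤ (L * C * M * u) * ((s₀ * u) ^ n / n.factorial) := by
    intro n
    rw [abs_div, abs_mul, abs_pow, abs_of_nonneg hu, abs_of_nonneg (by positivity : (0:ℝ) ≤ ((n+1).factorial : ℝ))]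
    have h1 : |y n| * u ^ (n + 1) ≤ L * (C * s₀ ^ n * M) * u ^ (n + 1) :=
      mul_le_mul_of_nonneg_right (hyb n) (by positivity)
    have h2 : ((n).factorial : ℝ) ≤ ((n+1).factorial : ℝ) := by
      exact_mod_cast Nat.factorial_le (Nat.le_succ n)
    have h3 : (0:ℝ) < (n).factorial := by positivity
    calc |y n| * u ^ (n + 1) / ((n+1).factorial : ℝ)
        ≤ L * (C * s₀ ^ n * M) * u ^ (n + 1) / ((n+1).factorial : ℝ) := by
          exact div_le_div_of_nonneg_right h1 (by positivity) |>.trans_eq rfl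
      _ ≤ L * (C * s₀ ^ n * M) * u ^ (n + 1) / ((n).factorial : ℝ) := by
          refine div_le_div_of_nonneg_left ?_ h3 h2
          positivity
      _ = (L * C * M * u) * ((s₀ * u) ^ n / n.factorial) := by
          rw [mul_pow, pow_succ]; ring
  have part2a : Summable fun n : ℕ => |y n * u ^ (n + 1) / (n + 1).factorial| := by
    refine Summable.of_nonneg_of_le (fun n => abs_nonneg _) hterm ?_
    exact (Real.summable_pow_div_factorial (s₀ * u)).mul_left _
  refine ⟨part2a, ?_⟩
  have hIint := w_aux_shift_int μ s₀ hs₀ hexp hae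
  have hIeq' : ∀ (N : ℕ) (ξ : ℝ), (∫ x, (ξ + x) ^ N ∂μ)
      = ∑ k ∈ Finset.range (N+1), (N.choose k : ℝ) * m (N-k) * ξ ^ k := by
    intro N ξ
    rw [w_aux_I_eq μ s₀ hs₀ hexp hae N ξ]
    exact Finset.sum_congr rfl fun k _ => by rw [hm]
  set J : ℕ → ℝ :=
    fun N => ∑ k ∈ Finset.range (N+1), (N.choose k : ℝ) * m (N-k) * (u^(k+1)/(k+1)) with hJ
  set F : ℕ × ℕ → ℝ :=
    fun p => m p.2 / (p.2.factorial) * a (p.1 + p.2) * (u^(p.1+1) / ((p.1+1).factorial)) with hF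
  -- summability of F over ℕ × ℕ
  have hA : Summable (fun n : ℕ => C * u * ((s₀*u)^n / n.factorial)) :=
    (Real.summable_pow_div_factorial _).mul_left _
  have hFsum : Summable F := by
    refine Summable.of_norm_bounded
      (g := fun p : ℕ × ℕ => (C * u * ((s₀*u)^p.1 / p.1.factorial)) * (s₀^p.2/p.2.factorial * m p.2))
      (hA.mul_of_nonneg hg (fun n => by positivity) hg0) ?_
    rintro ⟨n, q⟩
    simp only [Real.norm_eq_abs, hF]
    have h2 : ((n).factorial : ℝ) ≤ ((n+1).factorial : ℝ) := by
      exact_mod_cast Nat.factorial_le (Nat.le_succ n)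
    calc |m q / q.factorial * a (n + q) * (u ^ (n + 1) / ((n + 1).factorial : ℝ))|
        = m q / q.factorial * |a (n+q)| * (u^(n+1) / ((n+1).factorial : ℝ)) := by
          rw [abs_mul, abs_mul, abs_of_nonneg (div_nonneg (hm0 q) (by positivity : (0:ℝ) ≤ (q.factorial:ℝ))),
            abs_of_nonneg (div_nonneg (pow_nonneg hu _) (by positivity : (0:ℝ) ≤ ((n+1).factorial:ℝ)))]
      _ ≤ m q / q.factorial * (C * s₀^(n+q)) * (u^(n+1) / ((n+1).factorial:ℝ)) := by
          refine mul_le_mul_of_nonneg_right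
            (mul_le_mul_of_nonneg_left (ha (n+q)) (div_nonneg (hm0 q) (by positivity))) ?_
          exact div_nonneg (pow_nonneg hu _) (by positivity)
      _ ≤ m q / q.factorial * (C * s₀^(n+q)) * (u^(n+1) / ((n).factorial:ℝ)) := by
          refine mul_le_mul_of_nonneg_left
            (div_le_div_of_nonneg_left (pow_nonneg hu _) (by positivity) h2) ?_
          exact mul_nonneg (div_nonneg (hm0 q) (by positivity)) (by positivity)
      _ = (C * u * ((s₀*u)^n / n.factorial)) * (s₀^q/q.factorial * m q) := by
          rw [pow_add, mul_pow, pow_succ]; ring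
  have hfib : ∀ n : ℕ, Summable fun q : ℕ => F (n, q) := by
    intro n
    have h := (part1 n).of_abs.mul_right (u^(n+1) / (((n:ℕ)+1).factorial : ℝ))
    simpa only [hF] using h
  -- series side
  have hseries : ∑' n : ℕ, y n * u ^ (n + 1) / (n + 1).factorial = L * ∑' p : ℕ × ℕ, F p := by
    have h1 : ∀ n : ℕ, y n * u ^ (n + 1) / (n + 1).factorial = L * ∑' q, F (n, q) := by
      intro n
      have h2 : ∑' q : ℕ, F (n, q)
          = (∑' q : ℕ, m q / q.factorial * a (n+q)) * (u^(n+1)/((n+1).factorial:ℝ)) := by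
        simp only [hF]
        exact tsum_mul_right
      rw [h2, hy]; ring
    calc ∑' n : ℕ, y n * u ^ (n + 1) / (n + 1).factorial
        = ∑' n : ℕ, L * ∑' q, F (n, q) := tsum_congr h1
      _ = L * ∑' (n) (q), F (n, q) := tsum_mul_left
      _ = L * ∑' p : ℕ × ℕ, F p := by rw [← hFsum.tsum_prod' hfib]
  -- regrouping along antidiagonals
  have hanti : ∑' p : ℕ × ℕ, F p = ∑' N : ℕ, ∑ p ∈ Finset.HasAntidiagonal.antidiagonal N, F p := by
    have he := (Finset.HasAntidiagonal.sigmaAntidiagonalEquivProd (A := ℕ)).tsum_eq F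
    have hsig : Summable fun x : (Σ N : ℕ, Finset.HasAntidiagonal.antidiagonal N) =>
        F (Finset.HasAntidiagonal.sigmaAntidiagonalEquivProd x) :=
      (Finset.HasAntidiagonal.sigmaAntidiagonalEquivProd.summable_iff).2 hFsum
    rw [← he, hsig.tsum_sigma' (fun N => Summable.of_finite)]
    exact tsum_congr fun N => Finset.tsum_subtype (Finset.HasAntidiagonal.antidiagonal N) F
  -- per-antidiagonal identity
  have hNid : ∀ N : ℕ, ∑ p ∈ Finset.HasAntidiagonal.antidiagonal N, F p = a N / N.factorial * J N := by
    intro N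
    rw [Finset.Nat.sum_antidiagonal_eq_sum_range_succ_mk, hJ, Finset.mul_sum]
    refine Finset.sum_congr rfl fun k hk => ?_
    have hkN : k ≤ N := Nat.lt_succ_iff.mp (Finset.mem_range.mp hk)
    have hadd : k + (N - k) = N := Nat.add_sub_cancel' hkN
    have key : ((N.choose k : ℝ)) * (k.factorial : ℝ) * ((N-k).factorial : ℝ)
        = (N.factorial : ℝ) := by
      exact_mod_cast Nat.choose_mul_factorial_mul_factorial hkN
    have hfs : (((k+1).factorial : ℝ)) = ((k:ℝ)+1) * (k.factorial : ℝ) := by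
      push_cast [Nat.factorial_succ]; ring
    show m (N-k) / ((N-k).factorial:ℝ) * a (k + (N-k)) * (u^(k+1) / ((k+1).factorial:ℝ))
        = a N / N.factorial * ((N.choose k:ℝ) * m (N-k) * (u^(k+1)/((k:ℝ)+1)))
    have h1 : ((N-k).factorial:ℝ) ≠ 0 := by positivity
    have h2 : (k.factorial:ℝ) ≠ 0 := by positivity
    have h4 : ((k:ℝ)+1) ≠ 0 := by positivity
    have h5 : ((N.choose k : ℕ):ℝ) ≠ 0 := by
      exact_mod_cast (Nat.choose_pos hkN).ne'
    rw [hadd, hfs, ← key]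
    field_simp
  -- value of the set integral of the moment polynomial
  have hJint : ∀ N : ℕ, (∫ ξ in Set.Ioc (0:ℝ) u, (∫ x, (ξ + x) ^ N ∂μ)) = J N := by
    intro N
    rw [← intervalIntegral.integral_of_le hu]
    calc (∫ ξ in (0:ℝ)..u, ∫ x, (ξ + x) ^ N ∂μ)
        = ∫ ξ in (0:ℝ)..u, ∑ k ∈ Finset.range (N+1), (N.choose k:ℝ) * m (N-k) * ξ^k :=
          intervalIntegral.integral_congr fun ξ _ => hIeq' N ξ
      _ = ∑ k ∈ Finset.range (N+1), ∫ ξ in (0:ℝ)..u, (N.choose k:ℝ) * m (N-k) * ξ^k :=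
          intervalIntegral.integral_finset_sum fun k _ =>
            (Continuous.intervalIntegrable (by continuity) _ _)
      _ = J N := by
          refine Finset.sum_congr rfl fun k _ => ?_
          have hz : (0:ℝ)^(k+1) = 0 := zero_pow (Nat.succ_ne_zero k)
          rw [intervalIntegral.integral_const_mul, integral_pow, hz, sub_zero]
  -- inner integral as a series
  have hinner : ∀ ξ : ℝ, 0 ≤ ξ →
      (∫ x, c (ξ + x) ∂μ) = ∑' N : ℕ, a N / N.factorial * ∫ x, (ξ + x) ^ N ∂μ := by
    intro ξ hξ
    have hFi : ∀ N : ℕ, Integrable (fun x => a N / N.factorial * (ξ + x) ^ N) μ :=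
      fun N => (hIint N ξ).const_mul _
    have hnorm : ∀ N : ℕ, (∫ x, ‖a N / N.factorial * (ξ + x) ^ N‖ ∂μ)
        ≤ C * s₀ ^ N / N.factorial * ∫ x, (ξ + x) ^ N ∂μ := by
      intro N
      rw [← MeasureTheory.integral_const_mul]
      refine integral_mono_ae (hFi N).norm ((hIint N ξ).const_mul _) ?_
      filter_upwards [hae] with x hx
      rw [Real.norm_eq_abs, abs_mul, abs_pow, abs_of_nonneg (by linarith : (0:ℝ) ≤ ξ + x)]
      refine mul_le_mul_of_nonneg_right ?_ (by positivity)
      rw [abs_div, abs_of_nonneg (by positivity : (0:ℝ) ≤ (N.factorial:ℝ))]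
      gcongr
      exact ha N
    have hsm : Summable fun N : ℕ => ∫ x, ‖a N / N.factorial * (ξ + x) ^ N‖ ∂μ := by
      refine summable_of_sum_range_le (fun N => integral_nonneg fun x => norm_nonneg _)
        (c := C * (Real.exp (s₀ * ξ) * M)) ?_
      intro K
      calc ∑ N ∈ Finset.range K, ∫ x, ‖a N / N.factorial * (ξ + x) ^ N‖ ∂μ
          ≤ ∑ N ∈ Finset.range K, C * s₀ ^ N / N.factorial * ∫ x, (ξ + x) ^ N ∂μ :=
            Finset.sum_le_sum fun N _ => hnorm N
        _ = C * ∑ N ∈ Finset.range K, s₀ ^ N / N.factorial * ∫ x, (ξ + x) ^ N ∂μ := by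
            rw [Finset.mul_sum]; exact Finset.sum_congr rfl fun N _ => by ring
        _ ≤ C * (Real.exp (s₀ * ξ) * M) :=
            mul_le_mul_of_nonneg_left (w_aux_key μ s₀ hs₀ hexp hae hξ K) hC
    have hceq : (fun x : ℝ => c (ξ + x)) = fun x => ∑' N : ℕ, a N / N.factorial * (ξ + x) ^ N := by
      funext x; rw [hc]; exact tsum_congr fun n => by ring
    rw [hceq, ← integral_tsum_of_summable_integral_norm hFi hsm]
    exact tsum_congr fun N => MeasureTheory.integral_const_mul _ _
  -- continuity of the moment polynomial
  have hcont : ∀ N : ℕ, Continuous fun ξ : ℝ => ∫ x, (ξ + x) ^ N ∂μ := by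
    intro N
    have h1 : (fun ξ : ℝ => ∫ x, (ξ + x) ^ N ∂μ)
        = fun ξ => ∑ k ∈ Finset.range (N+1), (N.choose k:ℝ) * m (N-k) * ξ^k :=
      funext fun ξ => hIeq' N ξ
    rw [h1]
    exact continuous_finset_sum _ fun k _ => continuous_const.mul (continuous_pow k)
  have hIOint : ∀ N : ℕ, IntegrableOn
      (fun ξ => a N / N.factorial * ∫ x, (ξ + x) ^ N ∂μ) (Set.Ioc 0 u) volume :=
    fun N => (continuous_const.mul (hcont N)).integrableOn_Ioc
  have houternorm : ∀ N : ℕ,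
      (∫ ξ in Set.Ioc (0:ℝ) u, ‖a N / N.factorial * ∫ x, (ξ + x) ^ N ∂μ‖)
      ≤ C * s₀ ^ N / N.factorial * ∫ ξ in Set.Ioc (0:ℝ) u, ∫ x, (ξ + x) ^ N ∂μ := by
    intro N
    rw [← MeasureTheory.integral_const_mul]
    refine setIntegral_mono_on (hIOint N).norm
      ((continuous_const.mul (hcont N)).integrableOn_Ioc) measurableSet_Ioc ?_
    intro ξ hξ
    rw [Real.norm_eq_abs, abs_mul, abs_of_nonneg (w_aux_I_nonneg μ hae N hξ.1.le)]
    refine mul_le_mul_of_nonneg_right ?_ (w_aux_I_nonneg μ hae N hξ.1.le)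
    rw [abs_div, abs_of_nonneg (by positivity : (0:ℝ) ≤ (N.factorial:ℝ))]
    gcongr
    exact ha N
  have hsum2 : Summable fun N : ℕ =>
      ∫ ξ in Set.Ioc (0:ℝ) u, ‖a N / N.factorial * ∫ x, (ξ + x) ^ N ∂μ‖ := by
    refine summable_of_sum_range_le (fun N => integral_nonneg fun ξ => norm_nonneg _)
      (c := u * (C * (Real.exp (s₀ * u) * M))) ?_
    intro K
    calc ∑ N ∈ Finset.range K, ∫ ξ in Set.Ioc (0:ℝ) u, ‖a N / N.factorial * ∫ x, (ξ + x) ^ N ∂μ‖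
        ≤ ∑ N ∈ Finset.range K, C * s₀ ^ N / N.factorial * ∫ ξ in Set.Ioc (0:ℝ) u, ∫ x, (ξ + x) ^ N ∂μ :=
          Finset.sum_le_sum fun N _ => houternorm N
      _ = ∫ ξ in Set.Ioc (0:ℝ) u, ∑ N ∈ Finset.range K, C * s₀ ^ N / N.factorial * ∫ x, (ξ + x) ^ N ∂μ := by
          rw [MeasureTheory.integral_finset_sum (μ := volume.restrict (Set.Ioc 0 u)) (f := fun (N : ℕ) (ξ : ℝ) => C * s₀ ^ N / (N.factorial : ℝ) * ∫ x, (ξ + x) ^ N ∂μ) _ fun N _ => (continuous_const.mul (hcont N)).integrableOn_Ioc]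
          exact Finset.sum_congr rfl fun N _ => (MeasureTheory.integral_const_mul _ _).symm
      _ ≤ ∫ ξ in Set.Ioc (0:ℝ) u, C * (Real.exp (s₀ * u) * M) := by
          refine setIntegral_mono_on
            (integrable_finset_sum _ fun N _ => ((continuous_const.mul (hcont N) : Continuous fun ξ => C * s₀ ^ N / N.factorial * ∫ x, (ξ + x) ^ N ∂μ).integrableOn_Ioc))
            (integrableOn_const measure_Ioc_lt_top.ne) measurableSet_Ioc ?_
          intro ξ hξ
          have h1 : ∑ N ∈ Finset.range K, C * s₀ ^ N / N.factorial * ∫ x, (ξ + x) ^ N ∂μ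
              = C * ∑ N ∈ Finset.range K, s₀ ^ N / N.factorial * ∫ x, (ξ + x) ^ N ∂μ := by
            rw [Finset.mul_sum]; exact Finset.sum_congr rfl fun N _ => by ring
          rw [h1]
          refine mul_le_mul_of_nonneg_left ?_ hC
          refine (w_aux_key μ s₀ hs₀ hexp hae hξ.1.le K).trans ?_
          refine mul_le_mul_of_nonneg_right ?_ hM0
          exact Real.exp_le_exp.mpr (mul_le_mul_of_nonneg_left hξ.2 hs₀.le)
      _ = u * (C * (Real.exp (s₀*u) * M)) := by
          rw [setIntegral_const, smul_eq_mul, Real.volume_real_Ioc_of_le hu, sub_zero]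
  have houter : (∫ ξ in Set.Ioc (0:ℝ) u, ∑' N : ℕ, a N / N.factorial * ∫ x, (ξ + x) ^ N ∂μ)
      = ∑' N : ℕ, a N / N.factorial * J N := by
    rw [← integral_tsum_of_summable_integral_norm (fun N => hIOint N) hsum2]
    exact tsum_congr fun N => by rw [MeasureTheory.integral_const_mul, hJint N]
  have hWu : W u = L * ∑' N : ℕ, a N / N.factorial * J N := by
    rw [hW, intervalIntegral.integral_of_le hu]
    congr 1
    rw [← houter]
    exact setIntegral_congr_fun measurableSet_Ioc fun ξ hξ => hinner ξ hξ.1.le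
  calc ∑' n : ℕ, y n * u ^ (n + 1) / (n + 1).factorial
      = L * ∑' p : ℕ × ℕ, F p := hseries
    _ = L * ∑' N : ℕ, ∑ p ∈ Finset.HasAntidiagonal.antidiagonal N, F p := by rw [hanti]
    _ = L * ∑' N : ℕ, a N / N.factorial * J N := by rw [tsum_congr hNid]
    _ = W u := hWu.symm
end
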